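/- arXiv:0811.0951 — 11 statements merged into one kernel-verified Lean document; each statement's English description precedes it below -/
import Mathlib

section
/- Let a, b, c > 0 and p < q < r be real numbers, and let f(u) = -a u^p + b u^q - c u^r for u > 0. Then there exists u > 0 with f(u) > 0 if and only if a < b · ((r-q)/(r-p)) · (b(q-p)/(c(r-p)))^{(q-p)/(r-q)}. -/
/-!
Writing `s = q - p`, `t = r - p`, one has `f u = u ^ p * (b * u ^ s - c * u ^ t - a)`, so the claim
is that `T` is the supremum (in fact the maximum) of `g u = b * u ^ s - c * u ^ t` over `u > 0`.
At the critical point `u₀ = (b s / (c t)) ^ (1 / (t - s))` one has `c u₀ ^ t = (s / t) b u₀ ^ s`, so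
with `u = u₀ x`, `g u = b u₀ ^ s (x ^ s - (s / t) x ^ t)`, and weighted AM-GM for `x ^ t` and `1`
with weights `s / t`, `1 - s / t` gives `x ^ s - (s / t) x ^ t ≤ 1 - s / t`, with equality at `x = 1`.
-/

open Real

lemma rpow_sub_div_mul_rpow_le {s t x : ℝ} (hs : 0 < s) (hst : s < t) (hx : 0 ≤ x) :
    x ^ s - s / t * x ^ t ≤ 1 - s / t := by
  have ht : 0 < t := hs.trans hst
  have hw : 0 ≤ 1 - s / t := sub_nonneg.2 ((div_le_one ht).2 hst.le)
  have amgm := geom_mean_le_arith_mean2_weighted (div_pos hs ht).le hw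
    (rpow_nonneg hx t) zero_le_one (add_sub_cancel _ _)
  rw [← rpow_mul hx, mul_div_cancel₀ s ht.ne', one_rpow, mul_one, mul_one] at amgm
  linarith

lemma mul_rpow_sub_mul_rpow_mul_eq {b c s t u₀ x : ℝ} (hu₀ : 0 < u₀) (hx : 0 ≤ x)
    (hcrit : c * u₀ ^ (t - s) = b * s / t) :
    b * (u₀ * x) ^ s - c * (u₀ * x) ^ t = b * u₀ ^ s * (x ^ s - s / t * x ^ t) := by
  have hu₀t : c * u₀ ^ t = b * s / t * u₀ ^ s := by
    rw [← hcrit, mul_assoc, ← rpow_add hu₀, sub_add_cancel]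
  rw [mul_rpow hu₀.le hx, mul_rpow hu₀.le hx, ← mul_assoc c, hu₀t]
  ring

lemma exists_critical_point_mul_rpow_sub_mul_rpow {b c s t : ℝ} (hb : 0 < b) (hc : 0 < c)
    (hs : 0 < s) (hst : s < t) :
    ∃ u₀ > 0, c * u₀ ^ (t - s) = b * s / t ∧
      b * u₀ ^ s * (1 - s / t) = b * ((t - s) / t) * (b * s / (c * t)) ^ (s / (t - s)) := by
  have ht : 0 < t := hs.trans hst
  have hts : t - s ≠ 0 := (sub_pos.2 hst).ne'
  have hX : 0 ≤ b * s / (c * t) := by positivity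
  refine ⟨(b * s / (c * t)) ^ (1 / (t - s)), by positivity, ?_, ?_⟩
  · rw [← rpow_mul hX, one_div_mul_cancel hts, rpow_one]
    field_simp
  · rw [← rpow_mul hX, one_div_mul_eq_div, one_sub_div ht.ne']
    ring

lemma mul_rpow_sub_mul_rpow_le {b c s t u : ℝ} (hb : 0 < b) (hc : 0 < c) (hs : 0 < s)
    (hst : s < t) (hu : 0 < u) :
    b * u ^ s - c * u ^ t ≤ b * ((t - s) / t) * (b * s / (c * t)) ^ (s / (t - s)) := by
  obtain ⟨u₀, hu₀, hcrit, hmax⟩ := exists_critical_point_mul_rpow_sub_mul_rpow hb hc hs hst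
  have hx : 0 ≤ u / u₀ := by positivity
  rw [← hmax, ← mul_div_cancel₀ u hu₀.ne', mul_rpow_sub_mul_rpow_mul_eq hu₀ hx hcrit]
  exact mul_le_mul_of_nonneg_left (rpow_sub_div_mul_rpow_le hs hst hx) (by positivity)

lemma exists_lt_mul_rpow_sub_mul_rpow_iff {a b c s t : ℝ} (hb : 0 < b) (hc : 0 < c)
    (hs : 0 < s) (hst : s < t) :
    (∃ u, 0 < u ∧ a < b * u ^ s - c * u ^ t) ↔
      a < b * ((t - s) / t) * (b * s / (c * t)) ^ (s / (t - s)) := by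
  constructor
  · rintro ⟨u, hu, hau⟩
    exact hau.trans_le (mul_rpow_sub_mul_rpow_le hb hc hs hst hu)
  · intro ha
    obtain ⟨u₀, hu₀, hcrit, hmax⟩ := exists_critical_point_mul_rpow_sub_mul_rpow hb hc hs hst
    refine ⟨u₀, hu₀, ?_⟩
    rwa [← mul_one u₀, mul_rpow_sub_mul_rpow_mul_eq hu₀ zero_le_one hcrit, one_rpow, one_rpow,
      mul_one, hmax]

lemma neg_mul_rpow_add_mul_rpow_sub_mul_rpow {a b c p q r u : ℝ} (hu : 0 < u) :
    -a * u ^ p + b * u ^ q - c * u ^ r = u ^ p * (b * u ^ (q - p) - c * u ^ (r - p) - a) := by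
  rw [mul_sub, mul_sub, mul_left_comm _ b, mul_left_comm _ c, ← rpow_add hu, ← rpow_add hu,
    add_sub_cancel, add_sub_cancel]
  ring

theorem stmt_1_general (a b c p q r : ℝ) (hb : 0 < b) (hc : 0 < c)
    (hpq : p < q) (hqr : q < r)
    (f : ℝ → ℝ) (hf : f = fun u : ℝ => -a * u ^ p + b * u ^ q - c * u ^ r) :
    (∃ u : ℝ, 0 < u ∧ 0 < f u) ↔
      a < b * ((r - q) / (r - p)) *
        (b * (q - p) / (c * (r - p))) ^ ((q - p) / (r - q)) := by
  subst hf
  have hpos_iff : ∀ u, 0 < u → (0 < -a * u ^ p + b * u ^ q - c * u ^ r ↔ a < b * u ^ (q - p) - c * u ^ (r - p)) := fun u hu ↦ by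
    rw [neg_mul_rpow_add_mul_rpow_sub_mul_rpow hu, mul_pos_iff_of_pos_left (rpow_pos_of_pos hu p),
      sub_pos]
  have hmax := exists_lt_mul_rpow_sub_mul_rpow_iff (a := a) hb hc (sub_pos.2 hpq)
    (sub_lt_sub_right hqr p)
  rw [sub_sub_sub_cancel_right] at hmax
  rw [← hmax]
  exact exists_congr fun u ↦ and_congr_right (hpos_iff u)

/-- `∃ u > 0, f u > 0` iff `a < b ((r-q)/(r-p)) (b(q-p)/(c(r-p)))^{(q-p)/(r-q)}`. -/
theorem stmt_1 (a b c p q r : ℝ) (ha : 0 < a) (hb : 0 < b) (hc : 0 < c)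
    (hpq : p < q) (hqr : q < r)
    (f : ℝ → ℝ) (hf : f = fun u : ℝ => -a * u ^ p + b * u ^ q - c * u ^ r) :
    (∃ u : ℝ, 0 < u ∧ 0 < f u) ↔
      a < b * ((r - q) / (r - p)) *
        (b * (q - p) / (c * (r - p))) ^ ((q - p) / (r - q)) :=
  stmt_1_general a b c p q r hb hc hpq hqr f hf
end

section
/- Let a, b, c > 0 and p < q < r be real numbers, let f(u) = -a u^p + b u^q - c u^r for u > 0, and let f̃(u) = (u f'(u))' f(u) - u f'(u)^2. Then there exists u > 0 with f(u) > 0 if and only if f̃(u) < 0 for every u > 0. -/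
/-!
With `θ = u d/du` one has `u f̃ = (θ²f) f - (θf)²`, and since `θ uᵖ = p uᵖ`, a Lagrange-type
identity gives `u f̃ = Σ_{i<j} cᵢ cⱼ (pᵢ - pⱼ)² u^(pᵢ + pⱼ)` for `f = Σ cᵢ u^pᵢ`.
Put `α = q - p`, `β = r - q`. Dividing by positive powers of `u`, `f u > 0` becomes `G u < b`
and `f̃ u < 0` becomes `a c (α + β)² < b H u`, where `G u = a u^(-α) + c u^β` and
`H u = a α² u^(-β) + c β² u^α`. Both `G` and `H` attain their minimum at the point `w` with
`w^(α + β) = a α / (c β)`, and `G w * H w = a c (α + β)²`, so both conditions say `G w < b`.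
-/

open Real Filter

noncomputable def trinomial (a b c p q r u : ℝ) : ℝ := a * u ^ p + b * u ^ q + c * u ^ r

section Trinomial

variable {a b c p q r u : ℝ}

theorem hasDerivAt_trinomial (hu : u ≠ 0) :
    HasDerivAt (trinomial a b c p q r)
      (a * (p * u ^ (p - 1)) + b * (q * u ^ (q - 1)) + c * (r * u ^ (r - 1))) u :=
  (((hasDerivAt_rpow_const (Or.inl hu)).const_mul a).add
    ((hasDerivAt_rpow_const (Or.inl hu)).const_mul b)).add
    ((hasDerivAt_rpow_const (Or.inl hu)).const_mul c)

theorem mul_deriv_trinomial (hu : 0 < u) :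
    u * deriv (trinomial a b c p q r) u = trinomial (a * p) (b * q) (c * r) p q r u := by
  rw [(hasDerivAt_trinomial hu.ne').deriv, trinomial, rpow_sub_one hu.ne',
    rpow_sub_one hu.ne', rpow_sub_one hu.ne']
  field_simp

theorem mul_deriv_mul_deriv_trinomial (hu : 0 < u) :
    u * deriv (fun v => v * deriv (trinomial a b c p q r) v) u
      = trinomial (a * p ^ 2) (b * q ^ 2) (c * r ^ 2) p q r u := by
  have h : (fun v => v * deriv (trinomial a b c p q r) v)
      =ᶠ[nhds u] trinomial (a * p) (b * q) (c * r) p q r := by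
    filter_upwards [Ioi_mem_nhds hu] with v hv using mul_deriv_trinomial hv
  rw [h.deriv_eq, mul_deriv_trinomial hu]
  simp only [trinomial]
  ring

theorem trinomial_sq_sub_sq (hu : 0 < u) :
    trinomial (a * p ^ 2) (b * q ^ 2) (c * r ^ 2) p q r u * trinomial a b c p q r u
        - trinomial (a * p) (b * q) (c * r) p q r u ^ 2
      = a * b * (p - q) ^ 2 * u ^ (p + q) + a * c * (p - r) ^ 2 * u ^ (p + r)
        + b * c * (q - r) ^ 2 * u ^ (q + r) := by
  simp only [trinomial, rpow_add hu]
  ring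

theorem mul_tilde_trinomial (hu : 0 < u) :
    u * (deriv (fun v => v * deriv (trinomial a b c p q r) v) u * trinomial a b c p q r u
        - u * deriv (trinomial a b c p q r) u ^ 2)
      = a * b * (p - q) ^ 2 * u ^ (p + q) + a * c * (p - r) ^ 2 * u ^ (p + r)
        + b * c * (q - r) ^ 2 * u ^ (q + r) := by
  rw [← trinomial_sq_sub_sq hu, ← mul_deriv_mul_deriv_trinomial hu, ← mul_deriv_trinomial hu]
  ring

end Trinomial

section TwoPowers

variable {α β : ℝ}

theorem add_le_mul_rpow_neg_add_mul_rpow (hα : 0 ≤ α) (hβ : 0 ≤ β) {s : ℝ} (hs : 0 < s) :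
    α + β ≤ β * s ^ (-α) + α * s ^ β := by
  rw [rpow_def_of_pos hs, rpow_def_of_pos hs]
  nlinarith [mul_le_mul_of_nonneg_left (add_one_le_exp (log s * -α)) hβ,
    mul_le_mul_of_nonneg_left (add_one_le_exp (log s * β)) hα]

/-- A critical point of `u ↦ A u^(-α) + C u^β` on `(0, ∞)` is a global minimum. -/
theorem mul_rpow_neg_add_mul_rpow_le {A C w u : ℝ} (hA : 0 ≤ A) (hα : 0 ≤ α) (hβ : 0 < β)
    (hw : 0 < w) (hu : 0 < u) (hcrit : C * β * w ^ β = A * α * w ^ (-α)) :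
    A * w ^ (-α) + C * w ^ β ≤ A * u ^ (-α) + C * u ^ β := by
  have hs : 0 < u / w := div_pos hu hw
  have hu_eq : u = w * (u / w) := by field_simp
  have hyoung := mul_le_mul_of_nonneg_left (add_le_mul_rpow_neg_add_mul_rpow hα hβ.le hs)
    (mul_nonneg hA (rpow_nonneg hw.le (-α)))
  rw [hu_eq, mul_rpow hw.le hs.le, mul_rpow hw.le hs.le]
  refine le_of_mul_le_mul_left ?_ hβ
  linear_combination hyoung + (1 - (u / w) ^ β) * hcrit

theorem exists_rpow_neg_add_rpow_lt_iff {a b c : ℝ} (ha : 0 < a) (hc : 0 < c) (hα : 0 < α)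
    (hβ : 0 < β) :
    (∃ u, 0 < u ∧ a * u ^ (-α) + c * u ^ β < b) ↔
      ∀ u, 0 < u → a * c * (α + β) ^ 2 < b * (a * α ^ 2 * u ^ (-β) + c * β ^ 2 * u ^ α) := by
  set w := (a * α / (c * β)) ^ (α + β)⁻¹
  have hw : 0 < w := by positivity
  have hw_pow : c * β * w ^ (α + β) = a * α := by
    rw [← rpow_mul (by positivity), inv_mul_cancel₀ (by positivity), rpow_one]
    field_simp
  have hw_neg (x : ℝ) : w ^ (-x) * w ^ x = 1 := by rw [← rpow_add hw]; simp
  have hw_sub {x y : ℝ} : w ^ (x + y) * w ^ (-x) = w ^ y := by rw [← rpow_add hw]; ring_nf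
  have hcrit_G : c * β * w ^ β = a * α * w ^ (-α) := by
    linear_combination -(c * β) * hw_sub + w ^ (-α) * hw_pow
  have hcrit_H : c * β ^ 2 * α * w ^ α = a * α ^ 2 * β * w ^ (-β) := by
    rw [add_comm] at hw_pow
    linear_combination -(c * β ^ 2 * α) * hw_sub + α * β * w ^ (-β) * hw_pow
  have hmin_G (u : ℝ) (hu : 0 < u) : a * w ^ (-α) + c * w ^ β ≤ a * u ^ (-α) + c * u ^ β :=
    mul_rpow_neg_add_mul_rpow_le ha.le hα.le hβ hw hu hcrit_G
  have hmin_H (u : ℝ) (hu : 0 < u) :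
      a * α ^ 2 * w ^ (-β) + c * β ^ 2 * w ^ α ≤ a * α ^ 2 * u ^ (-β) + c * β ^ 2 * u ^ α :=
    mul_rpow_neg_add_mul_rpow_le (by positivity) hβ.le hα hw hu hcrit_H
  have hprod : (a * w ^ (-α) + c * w ^ β) * (a * α ^ 2 * w ^ (-β) + c * β ^ 2 * w ^ α)
      = a * c * (α + β) ^ 2 := by
    linear_combination (a * c * β ^ 2 + a * c * α * β) * hw_neg α
      + (a * c * α ^ 2 + a * c * α * β) * hw_neg β + (β * c * w ^ α - α * a * w ^ (-β)) * hcrit_G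
  have hH_pos (u : ℝ) (hu : 0 < u) : 0 < a * α ^ 2 * u ^ (-β) + c * β ^ 2 * u ^ α := by
    positivity
  constructor
  · rintro ⟨u₀, hu₀, hG⟩ u hu
    calc a * c * (α + β) ^ 2
        ≤ (a * w ^ (-α) + c * w ^ β) * (a * α ^ 2 * u ^ (-β) + c * β ^ 2 * u ^ α) := by
          rw [← hprod]; exact mul_le_mul_of_nonneg_left (hmin_H u hu) (by positivity)
      _ < b * (a * α ^ 2 * u ^ (-β) + c * β ^ 2 * u ^ α) :=
          mul_lt_mul_of_pos_right ((hmin_G u₀ hu₀).trans_lt hG) (hH_pos u hu)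
  · intro h
    refine ⟨w, hw, lt_of_mul_lt_mul_right ?_ (hH_pos w hw).le⟩
    rw [hprod]
    exact h w hw

end TwoPowers

section Reduction

variable {a b c p q r u : ℝ}

theorem trinomial_neg_neg_eq_rpow_mul (hu : 0 < u) :
    trinomial (-a) b (-c) p q r u = u ^ q * (b - (a * u ^ (-(q - p)) + c * u ^ (r - q))) := by
  have hp : u ^ p = u ^ (-(q - p)) * u ^ q := by rw [← rpow_add hu]; ring_nf
  have hr : u ^ r = u ^ (r - q) * u ^ q := by rw [← rpow_add hu]; ring_nf
  rw [trinomial, hp, hr]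
  ring

theorem mul_tilde_trinomial_neg_neg_eq_rpow_mul (hu : 0 < u) :
    u * (deriv (fun v => v * deriv (trinomial (-a) b (-c) p q r) v) u
          * trinomial (-a) b (-c) p q r u - u * deriv (trinomial (-a) b (-c) p q r) u ^ 2)
      = u ^ (p + r) * (a * c * ((q - p) + (r - q)) ^ 2
          - b * (a * (q - p) ^ 2 * u ^ (-(r - q)) + c * (r - q) ^ 2 * u ^ (q - p))) := by
  have hpq : u ^ (p + q) = u ^ (-(r - q)) * u ^ (p + r) := by rw [← rpow_add hu]; ring_nf
  have hqr : u ^ (q + r) = u ^ (q - p) * u ^ (p + r) := by rw [← rpow_add hu]; ring_nf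
  rw [mul_tilde_trinomial hu, hpq, hqr]
  ring

end Reduction

theorem stmt_5_general (a b c p q r : ℝ) (ha : 0 < a) (hc : 0 < c)
    (hpq : p < q) (hqr : q < r)
    (f : ℝ → ℝ) (hf : f = fun u : ℝ => -a * u ^ p + b * u ^ q - c * u ^ r)
    (ftilde : ℝ → ℝ)
    (hftilde : ftilde = fun u : ℝ =>
      deriv (fun v : ℝ => v * deriv f v) u * f u - u * (deriv f u) ^ 2) :
    (∃ u : ℝ, 0 < u ∧ 0 < f u) ↔ (∀ u : ℝ, 0 < u → ftilde u < 0) := by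
  have hf_trinomial : f = trinomial (-a) b (-c) p q r := by
    rw [hf]; funext u; simp only [trinomial]; ring
  subst hftilde hf_trinomial
  have hf_pos (u : ℝ) (hu : 0 < u) :
      0 < trinomial (-a) b (-c) p q r u ↔ a * u ^ (-(q - p)) + c * u ^ (r - q) < b := by
    rw [trinomial_neg_neg_eq_rpow_mul hu, mul_pos_iff_of_pos_left (by positivity), sub_pos]
  have hftilde_neg (u : ℝ) (hu : 0 < u) :
      deriv (fun v => v * deriv (trinomial (-a) b (-c) p q r) v) u
          * trinomial (-a) b (-c) p q r u - u * deriv (trinomial (-a) b (-c) p q r) u ^ 2 < 0 ↔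
        a * c * ((q - p) + (r - q)) ^ 2
          < b * (a * (q - p) ^ 2 * u ^ (-(r - q)) + c * (r - q) ^ 2 * u ^ (q - p)) := by
    rw [← mul_lt_mul_iff_right₀ hu, mul_zero, mul_tilde_trinomial_neg_neg_eq_rpow_mul hu,
      ← mul_zero (u ^ (p + r)), mul_lt_mul_iff_right₀ (by positivity), sub_neg]
  exact (exists_congr fun u => and_congr_right (hf_pos u)).trans
    ((exists_rpow_neg_add_rpow_lt_iff ha hc (sub_pos.2 hpq) (sub_pos.2 hqr)).trans
      (forall₂_congr fun u hu => (hftilde_neg u hu).symm))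

/-- `∃ u > 0, f u > 0` iff `f̃ u < 0` for every `u > 0`. -/
theorem stmt_5 (a b c p q r : ℝ) (ha : 0 < a) (hb : 0 < b) (hc : 0 < c)
    (hpq : p < q) (hqr : q < r)
    (f : ℝ → ℝ) (hf : f = fun u : ℝ => -a * u ^ p + b * u ^ q - c * u ^ r)
    (ftilde : ℝ → ℝ)
    (hftilde : ftilde = fun u : ℝ =>
      deriv (fun v : ℝ => v * deriv f v) u * f u - u * (deriv f u) ^ 2) :
    (∃ u : ℝ, 0 < u ∧ 0 < f u) ↔ (∀ u : ℝ, 0 < u → ftilde u < 0) :=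
  stmt_5_general a b c p q r ha hc hpq hqr f hf ftilde hftilde
end

section
/- Let a, b, c > 0 and p < q < r be real numbers, let f(u) = -a u^p + b u^q - c u^r for u > 0, and let f̃(u) = (u f'(u))' f(u) - u f'(u)^2. Then f(u) < 0 for every u > 0 if and only if there exists u > 0 with f̃(u) > 0. -/
/-!
Write `α = q - p`, `β = r - q`. Dividing by `u ^ q`, `f u < 0` says `b < g u` with
`g u = a u^(-α) + c u^β`. For any three-term combination `f = Σ wᵢ u^kᵢ` one has the
Lagrange-type identity `u f̃(u) = Σ_{i<j} wᵢ wⱼ (kᵢ - kⱼ)² u^(kᵢ + kⱼ)`, so dividing by `u^(p+r)`,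
`0 < f̃ u` says `b h(u) < a c (α + β)²` with `h u = a α² u^(-β) + c β² u^α`.
Both `g` and `h` attain their minimum at the point `x₀` with `α a = β c x₀^(α+β)` (tangent line
bound for `exp` in the variable `log u`), and `g x₀ * h x₀ = a c (α + β)²`; hence each of the two
conditions is equivalent to `b < g x₀`.
-/

open Real Filter Topology

lemma rpow_tangent_le {x₀ x : ℝ} (hx₀ : 0 < x₀) (hx : 0 < x) (k : ℝ) :
    x₀ ^ k * (1 + k * (log x - log x₀)) ≤ x ^ k := by
  have hsplit : x ^ k = x₀ ^ k * exp (k * (log x - log x₀)) := by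
    rw [rpow_def_of_pos hx, rpow_def_of_pos hx₀, ← exp_add]
    ring_nf
  rw [hsplit, add_comm 1]
  exact mul_le_mul_of_nonneg_left (add_one_le_exp _) (rpow_pos_of_pos hx₀ k).le

lemma rpow_neg_add_rpow_le {A C α β x₀ : ℝ} (hA : 0 ≤ A) (hC : 0 ≤ C) (hx₀ : 0 < x₀)
    (hcrit : α * A = β * C * x₀ ^ (α + β)) {x : ℝ} (hx : 0 < x) :
    A * x₀ ^ (-α) + C * x₀ ^ β ≤ A * x ^ (-α) + C * x ^ β := by
  have hcrit' : α * A * x₀ ^ (-α) = β * C * x₀ ^ β := by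
    rw [hcrit, rpow_add hx₀, rpow_neg hx₀.le]
    field_simp [(rpow_pos_of_pos hx₀ α).ne']
  have h₁ := mul_le_mul_of_nonneg_left (rpow_tangent_le hx₀ hx (-α)) hA
  have h₂ := mul_le_mul_of_nonneg_left (rpow_tangent_le hx₀ hx β) hC
  linear_combination h₁ + h₂ + (log x - log x₀) * hcrit'

lemma rpow_neg_add_rpow_mul_eq {A C α β x₀ : ℝ} (hx₀ : 0 < x₀)
    (hcrit : α * A = β * C * x₀ ^ (α + β)) :
    (A * x₀ ^ (-α) + C * x₀ ^ β) * (A * α ^ 2 * x₀ ^ (-β) + C * β ^ 2 * x₀ ^ α) =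
      A * C * (α + β) ^ 2 := by
  rw [rpow_add hx₀] at hcrit
  simp only [rpow_neg hx₀.le]
  field_simp [(rpow_pos_of_pos hx₀ α).ne', (rpow_pos_of_pos hx₀ β).ne']
  linear_combination (A * α + C * β * x₀ ^ α * x₀ ^ β - 2 * β * C * x₀ ^ α * x₀ ^ β) * hcrit

theorem forall_lt_rpow_neg_add_rpow_iff {A C α β b : ℝ} (hA : 0 < A) (hC : 0 < C)
    (hα : 0 < α) (hβ : 0 < β) (hb : 0 ≤ b) :
    (∀ u : ℝ, 0 < u → b < A * u ^ (-α) + C * u ^ β) ↔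
      ∃ u : ℝ, 0 < u ∧ b * (A * α ^ 2 * u ^ (-β) + C * β ^ 2 * u ^ α) < A * C * (α + β) ^ 2 := by
  have hratio : 0 < α * A / (β * C) := by positivity
  set x₀ := (α * A / (β * C)) ^ (α + β)⁻¹
  have hx₀ : 0 < x₀ := rpow_pos_of_pos hratio _
  have hcrit : α * A = β * C * x₀ ^ (α + β) := by
    rw [rpow_inv_rpow hratio.le (by positivity)]
    field_simp
  have hcrit' : β * (A * α ^ 2) = α * (C * β ^ 2) * x₀ ^ (β + α) := by
    rw [add_comm β]
    linear_combination α * β * hcrit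
  have hprod := rpow_neg_add_rpow_mul_eq hx₀ hcrit
  have hpos : 0 < A * α ^ 2 * x₀ ^ (-β) + C * β ^ 2 * x₀ ^ α := by positivity
  constructor
  · intro h
    refine ⟨x₀, hx₀, ?_⟩
    rw [← hprod]
    exact mul_lt_mul_of_pos_right (h x₀ hx₀) hpos
  · rintro ⟨v, hv, hbv⟩ u hu
    have hmin := rpow_neg_add_rpow_le (by positivity) (by positivity) hx₀ hcrit' hv
    have hlt : b * (A * α ^ 2 * x₀ ^ (-β) + C * β ^ 2 * x₀ ^ α) <
        (A * x₀ ^ (-α) + C * x₀ ^ β) * (A * α ^ 2 * x₀ ^ (-β) + C * β ^ 2 * x₀ ^ α) := by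
      rw [hprod]
      exact lt_of_le_of_lt (mul_le_mul_of_nonneg_left hmin hb) hbv
    exact (lt_of_mul_lt_mul_right hlt hpos.le).trans_le
      (rpow_neg_add_rpow_le hA.le hC.le hx₀ hcrit hu)

section ThreeTerms

variable {x y z p q r : ℝ}

lemma hasDerivAt_rpow_comb {u : ℝ} (hu : 0 < u) :
    HasDerivAt (fun v : ℝ => x * v ^ p + y * v ^ q + z * v ^ r)
      (x * (p * u ^ (p - 1)) + y * (q * u ^ (q - 1)) + z * (r * u ^ (r - 1))) u :=
  (((hasDerivAt_rpow_const (Or.inl hu.ne')).const_mul x).add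
    ((hasDerivAt_rpow_const (Or.inl hu.ne')).const_mul y)).add
    ((hasDerivAt_rpow_const (Or.inl hu.ne')).const_mul z)

lemma mul_deriv_rpow_comb {u : ℝ} (hu : 0 < u) :
    u * deriv (fun v : ℝ => x * v ^ p + y * v ^ q + z * v ^ r) u =
      x * p * u ^ p + y * q * u ^ q + z * r * u ^ r := by
  rw [(hasDerivAt_rpow_comb hu).deriv]
  simp only [rpow_sub_one hu.ne']
  field_simp

lemma mul_deriv_mul_deriv_rpow_comb {u : ℝ} (hu : 0 < u) :
    u * deriv (fun v => v * deriv (fun w : ℝ => x * w ^ p + y * w ^ q + z * w ^ r) v) u =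
      x * p ^ 2 * u ^ p + y * q ^ 2 * u ^ q + z * r ^ 2 * u ^ r := by
  have heq : (fun v => v * deriv (fun w : ℝ => x * w ^ p + y * w ^ q + z * w ^ r) v) =ᶠ[𝓝 u]
      fun v => x * p * v ^ p + y * q * v ^ q + z * r * v ^ r :=
    eventually_of_mem (Ioi_mem_nhds hu) fun _ hv => mul_deriv_rpow_comb hv
  rw [heq.deriv_eq, mul_deriv_rpow_comb (x := x * p) (y := y * q) (z := z * r) hu]
  ring

lemma mul_ftilde_rpow_comb {f : ℝ → ℝ} (hf : f = fun v : ℝ => x * v ^ p + y * v ^ q + z * v ^ r)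
    {u : ℝ} (hu : 0 < u) :
    u * (deriv (fun v => v * deriv f v) u * f u - u * deriv f u ^ 2) =
      x * y * (q - p) ^ 2 * (u ^ p * u ^ q) + x * z * (r - p) ^ 2 * (u ^ p * u ^ r) +
        y * z * (r - q) ^ 2 * (u ^ q * u ^ r) := by
  calc u * (deriv (fun v => v * deriv f v) u * f u - u * deriv f u ^ 2)
      = u * deriv (fun v => v * deriv f v) u * f u - (u * deriv f u) ^ 2 := by ring
    _ = _ := by
      rw [hf, mul_deriv_mul_deriv_rpow_comb hu, mul_deriv_rpow_comb hu]
      ring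

end ThreeTerms

lemma neg_rpow_add_rpow_sub_rpow_neg_iff {a b c p q r u : ℝ} (hu : 0 < u) :
    -a * u ^ p + b * u ^ q - c * u ^ r < 0 ↔ b < a * u ^ (-(q - p)) + c * u ^ (r - q) := by
  have hp : u ^ p = u ^ q * u ^ (-(q - p)) := by rw [← rpow_add hu, neg_sub, add_sub_cancel]
  have hr : u ^ r = u ^ q * u ^ (r - q) := by rw [← rpow_add hu, add_sub_cancel]
  have hfactor : -a * u ^ p + b * u ^ q - c * u ^ r =
      -(u ^ q * (a * u ^ (-(q - p)) + c * u ^ (r - q) - b)) := by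
    rw [hp, hr]
    ring
  rw [hfactor, neg_lt_zero, mul_pos_iff_of_pos_left (rpow_pos_of_pos hu q), sub_pos]

lemma ftilde_neg_rpow_add_rpow_sub_rpow_pos_iff {a b c p q r : ℝ} {f : ℝ → ℝ}
    (hf : f = fun u : ℝ => -a * u ^ p + b * u ^ q - c * u ^ r) {u : ℝ} (hu : 0 < u) :
    0 < deriv (fun v => v * deriv f v) u * f u - u * deriv f u ^ 2 ↔
      b * (a * (q - p) ^ 2 * u ^ (-(r - q)) + c * (r - q) ^ 2 * u ^ (q - p)) <
        a * c * ((q - p) + (r - q)) ^ 2 := by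
  have hpq : u ^ p * u ^ q = u ^ p * u ^ r * u ^ (-(r - q)) := by
    rw [neg_sub, mul_assoc, ← rpow_add hu r, add_sub_cancel]
  have hqr : u ^ q * u ^ r = u ^ p * u ^ r * u ^ (q - p) := by
    rw [mul_right_comm, ← rpow_add hu p, add_sub_cancel]
  have hfactor : u * (deriv (fun v => v * deriv f v) u * f u - u * deriv f u ^ 2) =
      u ^ p * u ^ r * (a * c * ((q - p) + (r - q)) ^ 2 -
        b * (a * (q - p) ^ 2 * u ^ (-(r - q)) + c * (r - q) ^ 2 * u ^ (q - p))) := by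
    have hf' : f = fun v : ℝ => -a * v ^ p + b * v ^ q + -c * v ^ r :=
      hf.trans (funext fun v => by ring)
    rw [mul_ftilde_rpow_comb hf' hu, hpq, hqr]
    ring
  rw [← mul_pos_iff_of_pos_left hu, hfactor, mul_pos_iff_of_pos_left (by positivity), sub_pos]

/-- `f u < 0` for every `u > 0` iff `∃ u > 0, f̃ u > 0`. -/
theorem stmt_7 (a b c p q r : ℝ) (ha : 0 < a) (hb : 0 < b) (hc : 0 < c)
    (hpq : p < q) (hqr : q < r)
    (f : ℝ → ℝ) (hf : f = fun u : ℝ => -a * u ^ p + b * u ^ q - c * u ^ r)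
    (ftilde : ℝ → ℝ)
    (hftilde : ftilde = fun u : ℝ =>
      deriv (fun v : ℝ => v * deriv f v) u * f u - u * (deriv f u) ^ 2) :
    (∀ u : ℝ, 0 < u → f u < 0) ↔ (∃ u : ℝ, 0 < u ∧ 0 < ftilde u) := by
  calc (∀ u : ℝ, 0 < u → f u < 0)
      ↔ ∀ u : ℝ, 0 < u → b < a * u ^ (-(q - p)) + c * u ^ (r - q) :=
        forall₂_congr fun u hu => by rw [hf]; exact neg_rpow_add_rpow_sub_rpow_neg_iff hu
    _ ↔ ∃ u : ℝ, 0 < u ∧ b * (a * (q - p) ^ 2 * u ^ (-(r - q)) + c * (r - q) ^ 2 * u ^ (q - p)) <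
          a * c * ((q - p) + (r - q)) ^ 2 :=
        forall_lt_rpow_neg_add_rpow_iff ha hc (sub_pos.2 hpq) (sub_pos.2 hqr) hb.le
    _ ↔ ∃ u : ℝ, 0 < u ∧ 0 < ftilde u :=
        exists_congr fun u => and_congr_right fun hu => by
          rw [hftilde]; exact (ftilde_neg_rpow_add_rpow_sub_rpow_pos_iff hf hu).symm
end

section
/- Let a, b, c > 0 and p < q < r be real numbers, let f(u) = -a u^p + b u^q - c u^r for u > 0, and let f̃(u) = (u f'(u))' f(u) - u f'(u)^2. Then f̃(u) < 0 for every u > 0 if and only if a < b · ((r-q)/(r-p)) · (b(q-p)/(c(r-p)))^{(q-p)/(r-q)}. -/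
/-!
The Euler operator `u d/du` multiplies `u ^ e` by `e`, so for `f = -a u^p + b u^q - c u^r` the
quantity `u f̃(u) = (u (u f')') f - (u f')²` is a Lagrange-type sum over pairs of exponents:
`u f̃(u) = u^(p+q) (a G(u) - H(u))` with `G(u) = c (r-p)² u^(r-q) - b (q-p)²` and
`H(u) = b c (r-q)² u^(r-p)`. Weighted AM-GM gives `T G ≤ H` on `(0, ∞)`, with equality at the
point `w` where `w^(r-q) = b (q-p) / (c (r-p))`, and there `G(w) > 0`. Since the condition
`a G < H` is affine in `a`, it holds everywhere iff `a < T`.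
-/

open Real Filter Set Topology

noncomputable def triplePow (a b c p q r u : ℝ) : ℝ := -a * u ^ p + b * u ^ q - c * u ^ r

noncomputable def tilde (f : ℝ → ℝ) (u : ℝ) : ℝ :=
  deriv (fun v => v * deriv f v) u * f u - u * deriv f u ^ 2

section TriplePow

variable {a b c p q r u : ℝ}

lemma hasDerivAt_triplePow (hu : 0 < u) :
    HasDerivAt (triplePow a b c p q r) (triplePow (a * p) (b * q) (c * r) p q r u / u) u := by
  have h := (((hasDerivAt_rpow_const (p := p) (Or.inl hu.ne')).const_mul (-a)).add
    ((hasDerivAt_rpow_const (p := q) (Or.inl hu.ne')).const_mul b)).sub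
    ((hasDerivAt_rpow_const (p := r) (Or.inl hu.ne')).const_mul c)
  refine h.congr_deriv ?_
  simp only [triplePow, rpow_sub_one hu.ne']
  field_simp

lemma mul_deriv_triplePow (hu : 0 < u) :
    u * deriv (triplePow a b c p q r) u = triplePow (a * p) (b * q) (c * r) p q r u := by
  rw [(hasDerivAt_triplePow hu).deriv, mul_div_cancel₀ _ hu.ne']

lemma mul_deriv_mul_deriv_triplePow (hu : 0 < u) :
    u * deriv (fun v => v * deriv (triplePow a b c p q r) v) u =
      triplePow (a * p * p) (b * q * q) (c * r * r) p q r u := by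
  have hE : (fun v => v * deriv (triplePow a b c p q r) v) =ᶠ[𝓝 u]
      triplePow (a * p) (b * q) (c * r) p q r :=
    eventually_of_mem (Ioi_mem_nhds hu) fun v hv => mul_deriv_triplePow hv
  rw [hE.deriv_eq, mul_deriv_triplePow hu]

lemma mul_tilde_triplePow (hu : 0 < u) :
    u * tilde (triplePow a b c p q r) u =
      u ^ (p + q) * (a * (c * (r - p) ^ 2 * u ^ (r - q) - b * (q - p) ^ 2) -
        b * c * (r - q) ^ 2 * u ^ (r - p)) := by
  have hxy : u ^ p * u ^ q = u ^ (p + q) := (rpow_add hu p q).symm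
  have hxz : u ^ p * u ^ r = u ^ (p + q) * u ^ (r - q) := by
    rw [← rpow_add hu, ← rpow_add hu]; ring_nf
  have hyz : u ^ q * u ^ r = u ^ (p + q) * u ^ (r - p) := by
    rw [← rpow_add hu, ← rpow_add hu]; ring_nf
  calc u * tilde (triplePow a b c p q r) u
      = u * deriv (fun v => v * deriv (triplePow a b c p q r) v) u * triplePow a b c p q r u -
          (u * deriv (triplePow a b c p q r) u) ^ 2 := by unfold tilde; ring
    _ = triplePow (a * p * p) (b * q * q) (c * r * r) p q r u * triplePow a b c p q r u -
          triplePow (a * p) (b * q) (c * r) p q r u ^ 2 := by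
        rw [mul_deriv_mul_deriv_triplePow hu, mul_deriv_triplePow hu]
    _ = _ := by
        simp only [triplePow]
        linear_combination a * c * (r - p) ^ 2 * hxz - a * b * (q - p) ^ 2 * hxy -
          b * c * (r - q) ^ 2 * hyz

lemma tilde_triplePow_neg_iff (hu : 0 < u) :
    tilde (triplePow a b c p q r) u < 0 ↔
      a * (c * (r - p) ^ 2 * u ^ (r - q) - b * (q - p) ^ 2) < b * c * (r - q) ^ 2 * u ^ (r - p) := by
  have hP := rpow_pos_of_pos hu (p + q)
  rw [← mul_lt_mul_iff_right₀ hu, mul_zero, mul_tilde_triplePow hu, ← sub_neg (a := a * _)]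
  exact ⟨fun h => neg_of_mul_neg_right h hP.le, mul_neg_of_pos_of_neg hP⟩

end TriplePow

lemma mul_rpow_mul_rpow_le {m n u w : ℝ} (hm : 0 < m) (hmn : m < n) (hu : 0 ≤ u) (hw : 0 ≤ w) :
    n * (u ^ m * w ^ (n - m)) ≤ m * u ^ n + (n - m) * w ^ n := by
  have hn : 0 < n := hm.trans hmn
  have h := geom_mean_le_arith_mean2_weighted (w₁ := m / n) (w₂ := (n - m) / n)
    (div_nonneg hm.le hn.le) (div_nonneg (sub_nonneg.2 hmn.le) hn.le)
    (rpow_nonneg hu n) (rpow_nonneg hw n) (by field_simp; ring)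
  rw [← rpow_mul hu, ← rpow_mul hw, mul_div_cancel₀ _ hn.ne', mul_div_cancel₀ _ hn.ne'] at h
  calc n * (u ^ m * w ^ (n - m)) ≤ n * (m / n * u ^ n + (n - m) / n * w ^ n) := by gcongr
    _ = m * u ^ n + (n - m) * w ^ n := by field_simp

lemma forall_mul_lt_iff {α : Type*} {s : Set α} {G H : α → ℝ} {a T : ℝ} (ha : 0 ≤ a)
    (hH : ∀ x ∈ s, 0 < H x) (hle : ∀ x ∈ s, T * G x ≤ H x) {x₀ : α} (hx₀ : x₀ ∈ s)
    (hG : 0 < G x₀) (heq : T * G x₀ = H x₀) :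
    (∀ x ∈ s, a * G x < H x) ↔ a < T := by
  refine ⟨fun h => lt_of_mul_lt_mul_right (heq ▸ h x₀ hx₀) hG.le, fun haT x hx => ?_⟩
  rcases le_or_gt (G x) 0 with hGx | hGx
  · exact (mul_nonpos_of_nonneg_of_nonpos ha hGx).trans_lt (hH x hx)
  · exact (mul_lt_mul_of_pos_right haT hGx).trans_le (hle x hx)

section Threshold

variable {b c p q r w : ℝ}

lemma threshold_mul_le (hb : 0 < b) (hc : 0 < c) (hpq : p < q) (hqr : q < r) (hw0 : 0 < w)
    (hw : c * (r - p) * w ^ (r - q) = b * (q - p)) {u : ℝ} (hu : 0 < u) :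
    b * ((r - q) / (r - p)) * w ^ (q - p) * (c * (r - p) ^ 2 * u ^ (r - q) - b * (q - p) ^ 2) ≤
      b * c * (r - q) ^ 2 * u ^ (r - p) := by
  have hamgm := mul_rpow_mul_rpow_le (sub_pos.2 hqr) (by linarith : r - q < r - p) hu.le hw0.le
  rw [sub_sub_sub_cancel_left] at hamgm
  have hwpow : w ^ (r - p) = w ^ (q - p) * w ^ (r - q) := by
    rw [← rpow_add hw0]; ring_nf
  have hrp : r - p ≠ 0 := by linarith
  have key : b * c * (r - q) ^ 2 * u ^ (r - p) -
      b * ((r - q) / (r - p)) * w ^ (q - p) * (c * (r - p) ^ 2 * u ^ (r - q) - b * (q - p) ^ 2) =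
      b * c * (r - q) * ((r - q) * u ^ (r - p) + (q - p) * w ^ (r - p) -
        (r - p) * (u ^ (r - q) * w ^ (q - p))) := by
    rw [hwpow]
    field_simp
    linear_combination (-((r - q) * (q - p) * w ^ (q - p))) * hw
  have hcoef : 0 ≤ b * c * (r - q) := by have := sub_pos.2 hqr; positivity
  rw [← sub_nonneg, key]
  exact mul_nonneg hcoef (sub_nonneg.2 hamgm)

lemma factor_eq_of_critical (hw : c * (r - p) * w ^ (r - q) = b * (q - p)) :
    c * (r - p) ^ 2 * w ^ (r - q) - b * (q - p) ^ 2 = b * (q - p) * (r - q) := by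
  linear_combination (r - p) * hw

lemma threshold_mul_eq_of_critical (hpq : p < q) (hqr : q < r) (hw0 : 0 < w)
    (hw : c * (r - p) * w ^ (r - q) = b * (q - p)) :
    b * ((r - q) / (r - p)) * w ^ (q - p) * (c * (r - p) ^ 2 * w ^ (r - q) - b * (q - p) ^ 2) =
      b * c * (r - q) ^ 2 * w ^ (r - p) := by
  have hwpow : w ^ (r - p) = w ^ (q - p) * w ^ (r - q) := by
    rw [← rpow_add hw0]; ring_nf
  have hrp : r - p ≠ 0 := by linarith
  have hsplit : b * c * (r - q) ^ 2 * (w ^ (q - p) * w ^ (r - q)) =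
      b * (r - q) ^ 2 * w ^ (q - p) / (r - p) * (c * (r - p) * w ^ (r - q)) := by
    field_simp
  rw [factor_eq_of_critical hw, hwpow, hsplit, hw]
  field_simp

end Threshold

/-- `f̃ u < 0` for every `u > 0` iff
`a < b ((r-q)/(r-p)) (b(q-p)/(c(r-p)))^{(q-p)/(r-q)}`. -/
theorem stmt_8 (a b c p q r : ℝ) (ha : 0 < a) (hb : 0 < b) (hc : 0 < c)
    (hpq : p < q) (hqr : q < r)
    (f : ℝ → ℝ) (hf : f = fun u : ℝ => -a * u ^ p + b * u ^ q - c * u ^ r)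
    (ftilde : ℝ → ℝ)
    (hftilde : ftilde = fun u : ℝ =>
      deriv (fun v : ℝ => v * deriv f v) u * f u - u * (deriv f u) ^ 2) :
    (∀ u : ℝ, 0 < u → ftilde u < 0) ↔
      a < b * ((r - q) / (r - p)) *
        (b * (q - p) / (c * (r - p))) ^ ((q - p) / (r - q)) := by
  have hqp : 0 < q - p := sub_pos.2 hpq
  have hrq : 0 < r - q := sub_pos.2 hqr
  have hrp : 0 < r - p := hqp.trans (by linarith)
  have hK : 0 < b * (q - p) / (c * (r - p)) := by positivity
  set w := (b * (q - p) / (c * (r - p))) ^ (r - q)⁻¹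
  have hw0 : 0 < w := rpow_pos_of_pos hK _
  have hw : c * (r - p) * w ^ (r - q) = b * (q - p) := by
    rw [rpow_inv_rpow hK.le hrq.ne']
    field_simp
  have hT : (b * (q - p) / (c * (r - p))) ^ ((q - p) / (r - q)) = w ^ (q - p) := by
    rw [← rpow_mul hK.le, inv_mul_eq_div]
  subst hf hftilde
  rw [hT, ← forall_mul_lt_iff (s := Ioi 0)
    (G := fun u => c * (r - p) ^ 2 * u ^ (r - q) - b * (q - p) ^ 2)
    (H := fun u => b * c * (r - q) ^ 2 * u ^ (r - p)) ha.le
    (fun u hu => mul_pos (by positivity) (rpow_pos_of_pos hu _))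
    (fun u hu => threshold_mul_le hb hc hpq hqr hw0 hw hu) (mem_Ioi.2 hw0)
    (by rw [factor_eq_of_critical hw]; positivity) (threshold_mul_eq_of_critical hpq hqr hw0 hw)]
  exact forall₂_congr fun u hu => tilde_triplePow_neg_iff hu
end

section
/- Let ω > 0 and q > p > 1 be real numbers, let f(u) = -ω u + u^p - u^q for u > 0, and let F(u) = ∫₀^u f(s) ds = -(ω/2) u^2 + u^{p+1}/(p+1) - u^{q+1}/(q+1). Define F̃(u) = (u f(u))' F(u) - u f(u)^2. Then there exists u > 0 with F(u) > 0 if and only if F̃(u) < 0 for every u > 0. -/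
/-!
With `X = u^(p-1)` and `Y = u^(q-1)` one has `F u = u² (X/(p+1) - Y/(q+1) - ω/2)`, and in
`F̃ u` the terms in `ω²` cancel:
`2 (p+1) (q+1) F̃ u = u³ (ω N(u) - 2 (q-p)² X Y)` with `N(u) = (q-1)² (p+1) Y - (p-1)² (q+1) X`.
Hence `F` is positive somewhere iff `ω < ω₀ = sup 2 (X/(p+1) - Y/(q+1))`, and, as `ω > 0`,
`F̃ < 0` everywhere iff `ω N(u) < 2 (q-p)² X Y` wherever `N(u) > 0`. Both conditions say `ω < ω₀`:
the supremum is attained at the critical point `u₀`, and the Bernoulli inequality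
`β t^α - α t^β ≤ β - α` (`0 < α ≤ β`), applied with `t = u/u₀` and with `t = u₀/u`, gives
`2 (X/(p+1) - Y/(q+1)) ≤ ω₀` and `ω₀ N(u) ≤ 2 (q-p)² X Y`, both with equality at `u₀`.
-/

open Real

theorem rpow_bernoulli {α β t : ℝ} (hα : 0 < α) (hαβ : α ≤ β) (ht : 0 < t) :
    β * t ^ α - α * t ^ β ≤ β - α := by
  have h := one_add_mul_self_le_rpow_one_add (s := t ^ α - 1)
    (by linarith [rpow_pos_of_pos ht α]) ((one_le_div hα).2 hαβ)
  rw [add_sub_cancel, ← rpow_mul ht.le, mul_div_cancel₀ _ hα.ne'] at h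
  have := mul_le_mul_of_nonneg_left h hα.le
  field_simp at this
  linarith

theorem rpow_bernoulli_homogeneous {α β u v : ℝ} (hα : 0 < α) (hαβ : α ≤ β) (hu : 0 < u)
    (hv : 0 < v) : β * u ^ α * v ^ β - α * u ^ β * v ^ α ≤ (β - α) * v ^ α * v ^ β := by
  have h := rpow_bernoulli hα hαβ (div_pos hu hv)
  rw [div_rpow hu.le hv.le, div_rpow hu.le hv.le] at h
  have := mul_le_mul_of_nonneg_right h (mul_pos (rpow_pos_of_pos hv α) (rpow_pos_of_pos hv β)).le
  field_simp at this
  linarith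

theorem rpow_eq_pow_mul_rpow_sub {u : ℝ} (hu : 0 < u) (r : ℝ) (n : ℕ) :
    u ^ r = u ^ n * u ^ (r - n) := by
  rw [← rpow_natCast, ← rpow_add hu, add_sub_cancel]

noncomputable section

namespace DoublePower

variable {ω p q u : ℝ}

def f (ω p q u : ℝ) : ℝ := -ω * u + u ^ p - u ^ q

def F (ω p q u : ℝ) : ℝ :=
  -(ω / 2) * u ^ (2 : ℝ) + u ^ (p + 1) / (p + 1) - u ^ (q + 1) / (q + 1)

def Ftilde (ω p q u : ℝ) : ℝ :=
  deriv (fun v : ℝ => v * f ω p q v) u * F ω p q u - u * f ω p q u ^ 2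

def frequencyBound (p q u : ℝ) : ℝ := 2 * (u ^ (p - 1) / (p + 1) - u ^ (q - 1) / (q + 1))

/-- The zero of the derivative of `frequencyBound p q`. -/
def criticalPoint (p q : ℝ) : ℝ := ((q + 1) * (p - 1) / ((q - 1) * (p + 1))) ^ (q - p)⁻¹

def criticalFrequency (p q : ℝ) : ℝ := frequencyBound p q (criticalPoint p q)

theorem f_eq (hu : 0 < u) : f ω p q u = u * (u ^ (p - 1) - u ^ (q - 1) - ω) := by
  rw [f, rpow_eq_pow_mul_rpow_sub hu p 1, rpow_eq_pow_mul_rpow_sub hu q 1]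
  push_cast
  ring

theorem F_eq (hu : 0 < u) :
    F ω p q u = u ^ 2 * (u ^ (p - 1) / (p + 1) - u ^ (q - 1) / (q + 1) - ω / 2) := by
  rw [F, rpow_two, rpow_eq_pow_mul_rpow_sub hu (p + 1) 2, rpow_eq_pow_mul_rpow_sub hu (q + 1) 2]
  push_cast
  ring_nf

theorem hasDerivAt_mul_f (hu : 0 < u) :
    HasDerivAt (fun v => v * f ω p q v)
      (u * (-2 * ω + (p + 1) * u ^ (p - 1) - (q + 1) * u ^ (q - 1))) u := by
  have hf : HasDerivAt (f ω p q) (-ω + p * u ^ (p - 1) - q * u ^ (q - 1)) u := by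
    refine ((((hasDerivAt_id' u).const_mul (-ω)).add
      (hasDerivAt_rpow_const (Or.inl hu.ne'))).sub
      (hasDerivAt_rpow_const (Or.inl hu.ne'))).congr_deriv ?_
    ring
  refine ((hasDerivAt_id' u).mul hf).congr_deriv ?_
  rw [f_eq hu]
  ring

theorem Ftilde_eq (hp : -1 < p) (hq : -1 < q) (hu : 0 < u) :
    Ftilde ω p q u = u ^ 3 / (2 * (p + 1) * (q + 1)) *
      (ω * ((q - 1) ^ 2 * (p + 1) * u ^ (q - 1) - (p - 1) ^ 2 * (q + 1) * u ^ (p - 1))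
        - 2 * (q - p) ^ 2 * (u ^ (p - 1) * u ^ (q - 1))) := by
  have : p + 1 ≠ 0 := by linarith
  have : q + 1 ≠ 0 := by linarith
  rw [Ftilde, (hasDerivAt_mul_f hu).deriv, F_eq hu, f_eq hu]
  field_simp
  ring

theorem F_pos_iff (hu : 0 < u) : 0 < F ω p q u ↔ ω < frequencyBound p q u := by
  rw [F_eq hu, mul_pos_iff_of_pos_left (by positivity), frequencyBound]
  constructor <;> intro h <;> linarith

theorem Ftilde_neg_iff (hp : -1 < p) (hq : -1 < q) (hu : 0 < u) :
    Ftilde ω p q u < 0 ↔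
      ω * ((q - 1) ^ 2 * (p + 1) * u ^ (q - 1) - (p - 1) ^ 2 * (q + 1) * u ^ (p - 1))
        < 2 * (q - p) ^ 2 * (u ^ (p - 1) * u ^ (q - 1)) := by
  have hp1 : 0 < p + 1 := by linarith
  have hq1 : 0 < q + 1 := by linarith
  have hc : 0 < u ^ 3 / (2 * (p + 1) * (q + 1)) := by positivity
  rw [Ftilde_eq hp hq hu, ← neg_pos, ← mul_neg, mul_pos_iff_of_pos_left hc, neg_pos, sub_neg]

theorem criticalPoint_pos (hp : 1 < p) (hpq : p < q) : 0 < criticalPoint p q :=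
  rpow_pos_of_pos (div_pos (mul_pos (by linarith) (by linarith))
    (mul_pos (by linarith) (by linarith))) _

theorem mul_criticalPoint_rpow_eq (hp : 1 < p) (hpq : p < q) :
    (q - 1) * (p + 1) * criticalPoint p q ^ (q - 1)
      = (q + 1) * (p - 1) * criticalPoint p q ^ (p - 1) := by
  have hc : 0 < (q + 1) * (p - 1) / ((q - 1) * (p + 1)) :=
    div_pos (mul_pos (by linarith) (by linarith)) (mul_pos (by linarith) (by linarith))
  have hpow : criticalPoint p q ^ (q - p) = (q + 1) * (p - 1) / ((q - 1) * (p + 1)) := by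
    rw [criticalPoint, ← rpow_mul hc.le, inv_mul_cancel₀ (by linarith), rpow_one]
  have hsplit : criticalPoint p q ^ (q - 1)
      = criticalPoint p q ^ (q - p) * criticalPoint p q ^ (p - 1) := by
    rw [← rpow_add (criticalPoint_pos hp hpq)]
    ring_nf
  have : q - 1 ≠ 0 := by linarith
  have : p + 1 ≠ 0 := by linarith
  rw [hsplit, hpow]
  field_simp

theorem frequencyBound_le_criticalFrequency (hp : 1 < p) (hpq : p < q) (hu : 0 < u) :
    frequencyBound p q u ≤ criticalFrequency p q := by
  have key := rpow_bernoulli_homogeneous (by linarith : 0 < p - 1) (by linarith : p - 1 ≤ q - 1)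
    hu (criticalPoint_pos hp hpq)
  have rel := mul_criticalPoint_rpow_eq hp hpq
  set X₀ := criticalPoint p q ^ (p - 1)
  set Y₀ := criticalPoint p q ^ (q - 1)
  have hX₀ : 0 < X₀ := rpow_pos_of_pos (criticalPoint_pos hp hpq) _
  have hp1 : 0 < p + 1 := by linarith
  have hq1 : 0 < q + 1 := by linarith
  have h : ((q + 1) * u ^ (p - 1) - (p + 1) * u ^ (q - 1)) * ((p - 1) * X₀)
      ≤ ((q + 1) * X₀ - (p + 1) * Y₀) * ((p - 1) * X₀) := by
    linear_combination (p + 1) * key - (u ^ (p - 1) - X₀) * rel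
  have hform : ∀ X Y : ℝ,
      2 * (X / (p + 1) - Y / (q + 1)) = 2 * ((q + 1) * X - (p + 1) * Y) / ((p + 1) * (q + 1)) := by
    intro X Y
    field_simp
  rw [criticalFrequency, frequencyBound, frequencyBound, hform, hform]
  gcongr 2 * ?_ / _
  exact le_of_mul_le_mul_right h (mul_pos (by linarith) hX₀)

theorem criticalFrequency_eq (hp : 1 < p) (hpq : p < q) :
    criticalFrequency p q = 2 * (q - p) * criticalPoint p q ^ (p - 1) / ((p + 1) * (q - 1)) := by
  have : p + 1 ≠ 0 := by linarith
  have : q + 1 ≠ 0 := by linarith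
  have : q - 1 ≠ 0 := by linarith
  rw [criticalFrequency, frequencyBound]
  field_simp
  linear_combination (-1) * mul_criticalPoint_rpow_eq hp hpq

theorem criticalFrequency_mul_le (hp : 1 < p) (hpq : p < q) (hu : 0 < u) :
    criticalFrequency p q
        * ((q - 1) ^ 2 * (p + 1) * u ^ (q - 1) - (p - 1) ^ 2 * (q + 1) * u ^ (p - 1))
      ≤ 2 * (q - p) ^ 2 * (u ^ (p - 1) * u ^ (q - 1)) := by
  have key := rpow_bernoulli_homogeneous (by linarith : 0 < p - 1) (by linarith : p - 1 ≤ q - 1)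
    (criticalPoint_pos hp hpq) hu
  have hcoeff : 0 ≤ 2 * (q - p) * (q - 1) * (p + 1) := by
    have : 0 < q - p := by linarith
    have : 0 < q - 1 := by linarith
    have : 0 < p + 1 := by linarith
    positivity
  rw [criticalFrequency_eq hp hpq, div_mul_eq_mul_div,
    div_le_iff₀ (mul_pos (by linarith) (by linarith))]
  linear_combination 2 * (q - p) * (q - 1) * (p + 1) * key
    + 2 * (q - p) * (p - 1) * u ^ (p - 1) * mul_criticalPoint_rpow_eq hp hpq

theorem Ftilde_criticalPoint_neg_iff (hp : 1 < p) (hpq : p < q) :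
    Ftilde ω p q (criticalPoint p q) < 0 ↔ ω < criticalFrequency p q := by
  have hu₀ := criticalPoint_pos hp hpq
  have rel := mul_criticalPoint_rpow_eq hp hpq
  set X₀ := criticalPoint p q ^ (p - 1)
  set Y₀ := criticalPoint p q ^ (q - 1)
  have hN : (q - 1) ^ 2 * (p + 1) * Y₀ - (p - 1) ^ 2 * (q + 1) * X₀
      = (q + 1) * (p - 1) * (q - p) * X₀ := by
    linear_combination (q - 1) * rel
  have hM : 2 * (q - p) ^ 2 * (X₀ * Y₀)
      = criticalFrequency p q * ((q + 1) * (p - 1) * (q - p) * X₀) := by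
    rw [criticalFrequency_eq hp hpq, div_mul_eq_mul_div,
      eq_div_iff (mul_pos (by linarith) (by linarith)).ne']
    linear_combination 2 * (q - p) ^ 2 * X₀ * rel
  have hN_pos : 0 < (q + 1) * (p - 1) * (q - p) * X₀ :=
    mul_pos (mul_pos (mul_pos (by linarith) (by linarith)) (by linarith)) (rpow_pos_of_pos hu₀ _)
  rw [Ftilde_neg_iff (by linarith) (by linarith) hu₀, hN, hM]
  exact mul_lt_mul_iff_of_pos_right hN_pos

theorem exists_F_pos_iff (hp : 1 < p) (hpq : p < q) :
    (∃ u, 0 < u ∧ 0 < F ω p q u) ↔ ω < criticalFrequency p q := by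
  constructor
  · rintro ⟨u, hu, hF⟩
    exact ((F_pos_iff hu).1 hF).trans_le (frequencyBound_le_criticalFrequency hp hpq hu)
  · exact fun h => ⟨_, criticalPoint_pos hp hpq, (F_pos_iff (criticalPoint_pos hp hpq)).2 h⟩

theorem forall_Ftilde_neg_iff (hω : 0 ≤ ω) (hp : 1 < p) (hpq : p < q) :
    (∀ u, 0 < u → Ftilde ω p q u < 0) ↔ ω < criticalFrequency p q := by
  refine ⟨fun h => (Ftilde_criticalPoint_neg_iff hp hpq).1 (h _ (criticalPoint_pos hp hpq)), ?_⟩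
  intro h u hu
  rw [Ftilde_neg_iff (by linarith) (by linarith) hu]
  rcases le_or_gt ((q - 1) ^ 2 * (p + 1) * u ^ (q - 1) - (p - 1) ^ 2 * (q + 1) * u ^ (p - 1)) 0
    with hN | hN
  · have : 0 < q - p := by linarith
    have := rpow_pos_of_pos hu (p - 1)
    have := rpow_pos_of_pos hu (q - 1)
    exact (mul_nonpos_of_nonneg_of_nonpos hω hN).trans_lt (by positivity)
  · exact (mul_lt_mul_of_pos_right h hN).trans_le (criticalFrequency_mul_le hp hpq hu)

end DoublePower

end

/-- For the double-power function `f u = -ω u + u^p - u^q` with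
antiderivative `F u = -(ω/2) u^2 + u^{p+1}/(p+1) - u^{q+1}/(q+1)` and
`F̃ u = (u f(u))' F(u) - u f(u)^2`, there exists `u > 0` with `F u > 0`
iff `F̃ u < 0` for every `u > 0`. -/
theorem stmt_9 (ω p q : ℝ) (hω : 0 < ω) (hp : 1 < p) (hpq : p < q)
    (f : ℝ → ℝ) (hf : f = fun u : ℝ => -ω * u + u ^ p - u ^ q)
    (F : ℝ → ℝ)
    (hF : F = fun u : ℝ =>
      -(ω / 2) * u ^ (2 : ℝ) + u ^ (p + 1) / (p + 1) - u ^ (q + 1) / (q + 1))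
    (Ftilde : ℝ → ℝ)
    (hFtilde : Ftilde = fun u : ℝ =>
      deriv (fun v : ℝ => v * f v) u * F u - u * (f u) ^ 2) :
    (∃ u : ℝ, 0 < u ∧ 0 < F u) ↔ (∀ u : ℝ, 0 < u → Ftilde u < 0) := by
  subst hf hF hFtilde
  exact (DoublePower.exists_F_pos_iff hp hpq).trans
    (DoublePower.forall_Ftilde_neg_iff hω.le hp hpq).symm
end

section
/- Let ω > 0 and q > p > 1 be real numbers, and let F(u) = -(ω/2) u^2 + u^{p+1}/(p+1) - u^{q+1}/(q+1) for u > 0. Then there exists u > 0 with F(u) > 0 if and only if ω < ω_{p,q}, where ω_{p,q} = (2(q-p)/((p+1)(q-1))) · ((p-1)(q+1)/((p+1)(q-1)))^{(p-1)/(q-p)}. -/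
/-!
Dividing by `u ^ 2`, `F u > 0` means `ω / 2 < g u` with
`g u = u ^ (p - 1) / (p + 1) - u ^ (q - 1) / (q + 1)`. After rescaling `u` by the critical point
`u⋆ = A ^ (1 / (q - p))`, `A = (p - 1)(q + 1) / ((p + 1)(q - 1))`, the weighted AM-GM inequality
`(q - 1) t ^ (p - 1) ≤ (p - 1) t ^ (q - 1) + (q - p)` shows that `g` attains its maximum
`ω_{p,q} / 2` at `u⋆`.
-/

open Real Set

theorem mul_rpow_le_mul_rpow_add_sub {a b t : ℝ} (ha : 0 < a) (hab : a ≤ b) (ht : 0 ≤ t) :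
    b * t ^ a ≤ a * t ^ b + (b - a) := by
  have hb : 0 < b := ha.trans_le hab
  have amgm := geom_mean_le_arith_mean2_weighted (div_pos ha hb).le
    (sub_nonneg.mpr ((div_le_one hb).mpr hab)) (rpow_nonneg ht b) zero_le_one (add_sub_cancel _ _)
  rw [one_rpow, mul_one, mul_one, ← rpow_mul ht, mul_div_cancel₀ _ hb.ne'] at amgm
  calc b * t ^ a ≤ b * (a / b * t ^ b + (1 - a / b)) := mul_le_mul_of_nonneg_left amgm hb.le
    _ = a * t ^ b + (b - a) := by field_simp

noncomputable section

def nonlinearQuotient (p q u : ℝ) : ℝ :=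
  u ^ (p - 1) / (p + 1) - u ^ (q - 1) / (q + 1)

def criticalRatio (p q : ℝ) : ℝ :=
  (p - 1) * (q + 1) / ((p + 1) * (q - 1))

def criticalPoint (p q : ℝ) : ℝ :=
  criticalRatio p q ^ (1 / (q - p))

def existenceThreshold (p q : ℝ) : ℝ :=
  2 * (q - p) / ((p + 1) * (q - 1)) * criticalRatio p q ^ ((p - 1) / (q - p))

end

theorem neg_mul_sq_add_rpow_eq_sq_mul_nonlinearQuotient {ω p q u : ℝ} (hu : 0 < u) :
    -(ω / 2) * u ^ (2 : ℝ) + u ^ (p + 1) / (p + 1) - u ^ (q + 1) / (q + 1) =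
      u ^ (2 : ℝ) * (nonlinearQuotient p q u - ω / 2) := by
  have split (r : ℝ) : u ^ (r + 1) = u ^ (2 : ℝ) * u ^ (r - 1) := by
    rw [← rpow_add hu]; ring_nf
  rw [nonlinearQuotient, split p, split q]
  ring

section Maximum

variable {p q : ℝ} (hp : 1 < p) (hpq : p < q)
include hp hpq

theorem criticalRatio_pos : 0 < criticalRatio p q :=
  div_pos (mul_pos (by linarith) (by linarith)) (mul_pos (by linarith) (by linarith))

theorem criticalPoint_pos : 0 < criticalPoint p q :=
  rpow_pos_of_pos (criticalRatio_pos hp hpq) _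

theorem criticalPoint_rpow_sub_one_left :
    criticalPoint p q ^ (p - 1) = criticalRatio p q ^ ((p - 1) / (q - p)) := by
  rw [criticalPoint, ← rpow_mul (criticalRatio_pos hp hpq).le, one_div_mul_eq_div]

theorem criticalPoint_rpow_sub_one_right :
    criticalPoint p q ^ (q - 1) =
      criticalRatio p q ^ ((p - 1) / (q - p)) * ((p - 1) * (q + 1) / ((p + 1) * (q - 1))) := by
  have hqp : q - p ≠ 0 := by linarith
  rw [criticalPoint, ← rpow_mul (criticalRatio_pos hp hpq).le]
  change _ = _ * criticalRatio p q
  rw [← rpow_add_one (criticalRatio_pos hp hpq).ne']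
  congr 1
  field_simp
  ring

theorem nonlinearQuotient_criticalPoint :
    nonlinearQuotient p q (criticalPoint p q) = existenceThreshold p q / 2 := by
  have : p + 1 ≠ 0 := by linarith
  have : q + 1 ≠ 0 := by linarith
  have : q - 1 ≠ 0 := by linarith
  rw [nonlinearQuotient, criticalPoint_rpow_sub_one_left hp hpq,
    criticalPoint_rpow_sub_one_right hp hpq, existenceThreshold]
  field_simp
  ring

theorem nonlinearQuotient_le {u : ℝ} (hu : 0 < u) :
    nonlinearQuotient p q u ≤ existenceThreshold p q / 2 := by
  have hc := criticalPoint_pos hp hpq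
  have ht : 0 < u / criticalPoint p q := div_pos hu hc
  have young := mul_rpow_le_mul_rpow_add_sub (a := p - 1) (b := q - 1) (by linarith) (by linarith)
    ht.le
  have hu_eq : u = criticalPoint p q * (u / criticalPoint p q) := by field_simp
  have : p + 1 ≠ 0 := by linarith
  have : q + 1 ≠ 0 := by linarith
  have : q - 1 ≠ 0 := by linarith
  set K := criticalRatio p q ^ ((p - 1) / (q - p))
  have hK : 0 < K := rpow_pos_of_pos (criticalRatio_pos hp hpq) _
  calc nonlinearQuotient p q u
      = K / ((p + 1) * (q - 1)) * ((q - 1) * (u / criticalPoint p q) ^ (p - 1) -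
          (p - 1) * (u / criticalPoint p q) ^ (q - 1)) := by
        rw [nonlinearQuotient, hu_eq, mul_rpow hc.le ht.le, mul_rpow hc.le ht.le,
          criticalPoint_rpow_sub_one_left hp hpq, criticalPoint_rpow_sub_one_right hp hpq]
        field_simp
        ring
    _ ≤ K / ((p + 1) * (q - 1)) * (q - p) :=
        mul_le_mul_of_nonneg_left (by linarith)
          (div_nonneg hK.le (mul_nonneg (by linarith) (by linarith)))
    _ = existenceThreshold p q / 2 := by
        rw [existenceThreshold]
        field_simp
        ring

theorem isGreatest_nonlinearQuotient :
    IsGreatest (nonlinearQuotient p q '' Ioi 0) (existenceThreshold p q / 2) :=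
  ⟨⟨criticalPoint p q, criticalPoint_pos hp hpq, nonlinearQuotient_criticalPoint hp hpq⟩,
    forall_mem_image.2 fun _ hu => nonlinearQuotient_le hp hpq hu⟩

end Maximum

theorem stmt_11_general (ω p q : ℝ) (hp : 1 < p) (hpq : p < q)
    (F : ℝ → ℝ)
    (hF : F = fun u : ℝ =>
      -(ω / 2) * u ^ (2 : ℝ) + u ^ (p + 1) / (p + 1) - u ^ (q + 1) / (q + 1)) :
    (∃ u : ℝ, 0 < u ∧ 0 < F u) ↔
      ω < 2 * (q - p) / ((p + 1) * (q - 1)) *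
        ((p - 1) * (q + 1) / ((p + 1) * (q - 1))) ^ ((p - 1) / (q - p)) := by
  calc (∃ u : ℝ, 0 < u ∧ 0 < F u) ↔ ∃ c ∈ nonlinearQuotient p q '' Ioi 0, ω / 2 < c := by
        simp only [hF, exists_mem_image, mem_Ioi]
        refine exists_congr fun u => and_congr_right fun hu => ?_
        rw [neg_mul_sq_add_rpow_eq_sq_mul_nonlinearQuotient hu,
          mul_pos_iff_of_pos_left (rpow_pos_of_pos hu 2), sub_pos]
    _ ↔ ω / 2 < existenceThreshold p q / 2 :=
        (lt_isLUB_iff (isGreatest_nonlinearQuotient hp hpq).isLUB).symm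
    _ ↔ _ := div_lt_div_iff_of_pos_right two_pos

/-- There exists `u > 0` with `F u > 0` iff `ω < ω_{p,q}`, where
`ω_{p,q} = (2(q-p)/((p+1)(q-1))) ((p-1)(q+1)/((p+1)(q-1)))^{(p-1)/(q-p)}`. -/
theorem stmt_11 (ω p q : ℝ) (hω : 0 < ω) (hp : 1 < p) (hpq : p < q)
    (F : ℝ → ℝ)
    (hF : F = fun u : ℝ =>
      -(ω / 2) * u ^ (2 : ℝ) + u ^ (p + 1) / (p + 1) - u ^ (q + 1) / (q + 1)) :
    (∃ u : ℝ, 0 < u ∧ 0 < F u) ↔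
      ω < 2 * (q - p) / ((p + 1) * (q - 1)) *
        ((p - 1) * (q + 1) / ((p + 1) * (q - 1))) ^ ((p - 1) / (q - p)) :=
  stmt_11_general ω p q hp hpq F hF
end

section
/- Let ω > 0 and q > p > 1 be real numbers, let f(u) = -ω u + u^p - u^q for u > 0, let F(u) = -(ω/2) u^2 + u^{p+1}/(p+1) - u^{q+1}/(q+1), and let F̃(u) = (u f(u))' F(u) - u f(u)^2. Then F̃(u) < 0 for every u > 0 if and only if ω < ω_{p,q}, where ω_{p,q} = (2(q-p)/((p+1)(q-1))) · ((p-1)(q+1)/((p+1)(q-1)))^{(p-1)/(q-p)}. -/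
/-!
Factoring out `u ^ (p + 2)`, the condition `F̃ u < 0` becomes `A u^(q-p) - B u^(q-1) < C` with
positive constants `A, B, C`. By Bernoulli's inequality, `u ↦ a u^α - b u^β` (`0 < α < β`)
attains its maximum `a (β-α)/β · (aα/(bβ))^(α/(β-α))` on `(0, ∞)`, so the condition holds for all
`u > 0` iff this maximum is below `C`; solving that inequality for `ω` gives `ω < ω_{p,q}`.
-/

open Real Set

section RpowDifference

variable {a b α β : ℝ}

lemma rpow_sub_div_mul_rpow_le_s12 {t : ℝ} (ht : 0 ≤ t) (hα : 0 < α) (hαβ : α < β) :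
    t ^ α - α / β * t ^ β ≤ (β - α) / β := by
  have hβ : 0 < β := hα.trans hαβ
  have bernoulli := one_add_mul_self_le_rpow_one_add (s := t ^ α - 1)
    (by linarith [rpow_nonneg ht α]) ((one_le_div hα).mpr hαβ.le)
  rw [add_sub_cancel, ← rpow_mul ht, mul_div_cancel₀ _ hα.ne'] at bernoulli
  have := mul_le_mul_of_nonneg_left bernoulli (div_pos hα hβ).le
  field_simp at this ⊢
  linarith

/-- `w` is the maximizer: rescaling by it reduces to the case of `t^α - (α/β) t^β`, maximal at
`t = 1`. -/
lemma mul_rpow_sub_mul_rpow_eq (ha : a ≠ 0) (hα : α ≠ 0) (hβ : β ≠ 0) {w u : ℝ} (hw : 0 < w)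
    (hu : 0 ≤ u) (hwc : w ^ (β - α) = a * α / (b * β)) :
    a * u ^ α - b * u ^ β = a * w ^ α * ((u / w) ^ α - α / β * (u / w) ^ β) := by
  have hwβ : w ^ β = w ^ α * (a * α / (b * β)) := by
    rw [← hwc, ← rpow_add hw, add_sub_cancel]
  have := (rpow_pos_of_pos hw α).ne'
  rw [div_rpow hu hw.le, div_rpow hu hw.le, hwβ]
  field_simp

theorem isGreatest_mul_rpow_sub_mul_rpow (ha : 0 < a) (hb : 0 < b) (hα : 0 < α)
    (hαβ : α < β) :
    IsGreatest ((fun u => a * u ^ α - b * u ^ β) '' Ioi 0)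
      (a * (β - α) / β * (a * α / (b * β)) ^ (α / (β - α))) := by
  have hβ : 0 < β := hα.trans hαβ
  have hβα : 0 < β - α := sub_pos.mpr hαβ
  set c := a * α / (b * β)
  have hc : 0 < c := by positivity
  set w := c ^ (β - α)⁻¹
  have hw : 0 < w := rpow_pos_of_pos hc _
  have hwc : w ^ (β - α) = c := rpow_inv_rpow hc.le hβα.ne'
  have hwα : w ^ α = c ^ (α / (β - α)) := by rw [← rpow_mul hc.le, inv_mul_eq_div]
  have hmax : a * (β - α) / β * c ^ (α / (β - α)) = a * w ^ α * ((β - α) / β) := by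
    rw [hwα]; ring
  refine ⟨⟨w, hw, ?_⟩, ?_⟩
  · simp only [hmax, mul_rpow_sub_mul_rpow_eq ha.ne' hα.ne' hβ.ne' hw hw.le hwc,
      div_self hw.ne', one_rpow]
    field_simp
  · rintro _ ⟨u, hu, rfl⟩
    dsimp only
    rw [hmax, mul_rpow_sub_mul_rpow_eq ha.ne' hα.ne' hβ.ne' hw hu.le hwc]
    exact mul_le_mul_of_nonneg_left
      (rpow_sub_div_mul_rpow_le_s12 (div_pos hu hw).le hα hαβ) (by positivity)

theorem forall_mul_rpow_sub_mul_rpow_lt_iff (ha : 0 < a) (hb : 0 < b) (hα : 0 < α)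
    (hαβ : α < β) {K : ℝ} :
    (∀ u : ℝ, 0 < u → a * u ^ α - b * u ^ β < K) ↔
      a * (β - α) / β * (a * α / (b * β)) ^ (α / (β - α)) < K := by
  rw [(isGreatest_mul_rpow_sub_mul_rpow ha hb hα hαβ).lt_iff, forall_mem_image]
  rfl

end RpowDifference

lemma mul_rpow_lt_iff_lt_rpow_inv_div {s γ x R : ℝ} (hs : 0 < s) (hγ : 0 < γ) (hx : 0 ≤ x)
    (hR : 0 ≤ R) : (s * x) ^ γ < R ↔ x < R ^ γ⁻¹ / s := by
  rw [← lt_rpow_inv_iff_of_pos (by positivity) hR hγ, lt_div_iff₀ hs, mul_comm]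

lemma deriv_mul_double_power (ω p q : ℝ) {u : ℝ} (hu : 0 < u) :
    deriv (fun v : ℝ => v * (-ω * v + v ^ p - v ^ q)) u
      = -(2 * ω) * u + (p + 1) * u ^ p - (q + 1) * u ^ q := by
  have hf : HasDerivAt (fun v : ℝ => -ω * v + v ^ p - v ^ q)
      (-ω * 1 + p * u ^ (p - 1) - q * u ^ (q - 1)) u :=
    (((hasDerivAt_id' u).const_mul (-ω)).add (hasDerivAt_rpow_const (Or.inl hu.ne'))).sub
      (hasDerivAt_rpow_const (Or.inl hu.ne'))
  have hmul : HasDerivAt (fun v : ℝ => v * (-ω * v + v ^ p - v ^ q)) _ u :=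
    (hasDerivAt_id' u).mul hf
  rw [hmul.deriv, rpow_sub_one hu.ne', rpow_sub_one hu.ne']
  field_simp
  ring

lemma double_power_Ftilde_eq (ω p q : ℝ) {u : ℝ} (hu : 0 < u) (hp : p + 1 ≠ 0)
    (hq : q + 1 ≠ 0) :
    deriv (fun v : ℝ => v * (-ω * v + v ^ p - v ^ q)) u *
        (-(ω / 2) * u ^ (2 : ℝ) + u ^ (p + 1) / (p + 1) - u ^ (q + 1) / (q + 1))
      - u * (-ω * u + u ^ p - u ^ q) ^ 2
    = u ^ (p + 2) *
        (ω * (q - 1) ^ 2 / (2 * (q + 1)) * u ^ (q - p)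
          - (q - p) ^ 2 / ((p + 1) * (q + 1)) * u ^ (q - 1)
          - ω * (p - 1) ^ 2 / (2 * (p + 1))) := by
  have hup := (rpow_pos_of_pos hu p).ne'
  rw [deriv_mul_double_power ω p q hu, rpow_two, rpow_add_one hu.ne', rpow_add_one hu.ne',
    rpow_add hu, rpow_two, rpow_sub hu, rpow_sub_one hu.ne']
  field_simp
  ring

noncomputable def omegaThreshold (p q : ℝ) : ℝ :=
  2 * (q - p) / ((p + 1) * (q - 1)) *
    ((p - 1) * (q + 1) / ((p + 1) * (q - 1))) ^ ((p - 1) / (q - p))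

theorem forall_rpow_sub_rpow_lt_iff_lt_omegaThreshold {ω p q : ℝ} (hω : 0 < ω) (hp : 1 < p)
    (hpq : p < q) :
    (∀ u : ℝ, 0 < u → ω * (q - 1) ^ 2 / (2 * (q + 1)) * u ^ (q - p)
        - (q - p) ^ 2 / ((p + 1) * (q + 1)) * u ^ (q - 1) < ω * (p - 1) ^ 2 / (2 * (p + 1))) ↔
      ω < omegaThreshold p q := by
  have hp1 : 0 < p - 1 := by linarith
  have hq1 : 0 < q - 1 := by linarith
  have hqp : 0 < q - p := by linarith
  have hp1' : 0 < p + 1 := by linarith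
  have hq1' : 0 < q + 1 := by linarith
  have hD : 0 < ω * (p - 1) * (q - 1) / (2 * (q + 1)) := by positivity
  have hs : 0 < (p + 1) * (q - 1) / (2 * (q - p)) := by positivity
  calc _ ↔ ω * (p - 1) * (q - 1) / (2 * (q + 1)) *
          ((p + 1) * (q - 1) / (2 * (q - p)) * ω) ^ ((q - p) / (p - 1))
          < ω * (p - 1) ^ 2 / (2 * (p + 1)) := by
        rw [forall_mul_rpow_sub_mul_rpow_lt_iff (by positivity) (by positivity) hqp (by linarith),
          sub_sub_sub_cancel_left,
          show ω * (q - 1) ^ 2 / (2 * (q + 1)) * (p - 1) / (q - 1)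
            = ω * (p - 1) * (q - 1) / (2 * (q + 1)) by field_simp,
          show ω * (q - 1) ^ 2 / (2 * (q + 1)) * (q - p) /
              ((q - p) ^ 2 / ((p + 1) * (q + 1)) * (q - 1))
            = (p + 1) * (q - 1) / (2 * (q - p)) * ω by field_simp]
    _ ↔ ((p + 1) * (q - 1) / (2 * (q - p)) * ω) ^ ((q - p) / (p - 1))
          < (p - 1) * (q + 1) / ((p + 1) * (q - 1)) := by
        rw [← lt_div_iff₀' hD]
        field_simp
    _ ↔ _ := by
        rw [mul_rpow_lt_iff_lt_rpow_inv_div hs (by positivity) hω.le (by positivity), inv_div,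
          div_eq_inv_mul, inv_div, omegaThreshold]

/-- `F̃ u < 0` for every `u > 0` iff `ω < ω_{p,q}`, where
`ω_{p,q} = (2(q-p)/((p+1)(q-1))) ((p-1)(q+1)/((p+1)(q-1)))^{(p-1)/(q-p)}`. -/
theorem stmt_12 (ω p q : ℝ) (hω : 0 < ω) (hp : 1 < p) (hpq : p < q)
    (f : ℝ → ℝ) (hf : f = fun u : ℝ => -ω * u + u ^ p - u ^ q)
    (F : ℝ → ℝ)
    (hF : F = fun u : ℝ =>
      -(ω / 2) * u ^ (2 : ℝ) + u ^ (p + 1) / (p + 1) - u ^ (q + 1) / (q + 1))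
    (Ftilde : ℝ → ℝ)
    (hFtilde : Ftilde = fun u : ℝ =>
      deriv (fun v : ℝ => v * f v) u * F u - u * (f u) ^ 2) :
    (∀ u : ℝ, 0 < u → Ftilde u < 0) ↔
      ω < 2 * (q - p) / ((p + 1) * (q - 1)) *
        ((p - 1) * (q + 1) / ((p + 1) * (q - 1))) ^ ((p - 1) / (q - p)) := by
  subst hf hF hFtilde
  refine (forall₂_congr fun u hu => ?_).trans
    (forall_rpow_sub_rpow_lt_iff_lt_omegaThreshold hω hp hpq)
  beta_reduce
  rw [double_power_Ftilde_eq ω p q hu (by linarith) (by linarith), ← mul_zero (u ^ (p + 2)),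
    mul_lt_mul_iff_right₀ (rpow_pos_of_pos hu _), sub_neg]
end

section
/- Let ω > 0 and q > p > 1 be real numbers, and let f(u) = -ω u + u^p - u^q for u > 0. Then there exists u > 0 with f(u) > 0 if and only if ω < η_{p,q}, where η_{p,q} = ((q-p)/(q-1)) · ((p-1)/(q-1))^{(p-1)/(q-p)}. -/
/-!
For `u > 0` we have `f u = u * (g u - ω)` with `g u = u^(p-1) - u^(q-1)`. Substituting
`s = u^(q-p)` turns `g` into `s^a (1 - s)` with `a = (p-1)/(q-p)`; by weighted AM-GM this is
maximal at `s = a/(a+1) = (p-1)/(q-1)`, where it equals `η_{p,q}`. Hence `f` is positive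
somewhere iff `ω` lies below this maximum.
-/

open Real Set

lemma rpow_mul_one_sub_le {a s : ℝ} (ha : 0 < a) (hs : 0 ≤ s) :
    s ^ a * (1 - s) ≤ (a / (a + 1)) ^ a * (1 - a / (a + 1)) := by
  set w := a / (a + 1) with hw_def
  have hw : 0 < w := by positivity
  have hw1 : 1 - w = 1 / (a + 1) := by rw [hw_def]; field_simp; ring
  have hw1pos : 0 < 1 - w := by rw [hw1]; positivity
  have hmax_pos : 0 < w ^ a * (1 - w) := by positivity
  rcases le_or_gt 1 s with h1 | h1
  · nlinarith [rpow_nonneg hs a]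
  have x₁ : 0 ≤ s / w := by positivity
  have x₂ : 0 ≤ (1 - s) / (1 - w) := div_nonneg (by linarith) hw1pos.le
  have amgm : (s / w) ^ w * ((1 - s) / (1 - w)) ^ (1 - w) ≤ 1 := by
    convert geom_mean_le_arith_mean2_weighted hw.le hw1pos.le x₁ x₂ (by ring) using 1
    field_simp; ring
  have hpow := rpow_le_rpow (by positivity) amgm (by linarith : (0:ℝ) ≤ a + 1)
  rw [one_rpow, mul_rpow (by positivity) (by positivity), ← rpow_mul x₁, ← rpow_mul x₂,
    show w * (a + 1) = a by rw [hw_def]; field_simp,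
    show (1 - w) * (a + 1) = 1 by rw [hw1]; field_simp, rpow_one, div_rpow hs hw.le,
    div_mul_div_comm, div_le_one hmax_pos] at hpow
  exact hpow

lemma rpow_sub_one_sub_rpow_sub_one_eq {p q u : ℝ} (hpq : p < q) (hu : 0 < u) :
    u ^ (p - 1) - u ^ (q - 1) = (u ^ (q - p)) ^ ((p - 1) / (q - p)) * (1 - u ^ (q - p)) := by
  rw [← rpow_mul hu.le, mul_div_cancel₀ _ (sub_ne_zero.2 hpq.ne'), mul_sub, mul_one,
    ← rpow_add hu]
  ring_nf

noncomputable def doublePowerThreshold (p q : ℝ) : ℝ :=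
  (q - p) / (q - 1) * ((p - 1) / (q - 1)) ^ ((p - 1) / (q - p))

lemma isGreatest_doublePowerThreshold {p q : ℝ} (hp : 1 < p) (hpq : p < q) :
    IsGreatest ((fun u ↦ u ^ (p - 1) - u ^ (q - 1)) '' Ioi 0) (doublePowerThreshold p q) := by
  set a := (p - 1) / (q - p) with ha_def
  have ha : 0 < a := div_pos (by linarith) (by linarith)
  have hq : q - 1 ≠ 0 := by linarith
  have hqp : q - p ≠ 0 := by linarith
  have hpeak : a / (a + 1) = (p - 1) / (q - 1) := by
    rw [ha_def, div_add_one hqp, div_div_div_cancel_right₀ hqp]; ring_nf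
  have hη : (a / (a + 1)) ^ a * (1 - a / (a + 1)) = doublePowerThreshold p q := by
    rw [doublePowerThreshold, hpeak, mul_comm]; congr 1; field_simp; ring
  refine ⟨?_, ?_⟩
  · have hs : 0 < a / (a + 1) := by positivity
    refine ⟨(a / (a + 1)) ^ (q - p)⁻¹, rpow_pos_of_pos hs _, ?_⟩
    simp only
    rw [rpow_sub_one_sub_rpow_sub_one_eq hpq (rpow_pos_of_pos hs _), ← rpow_mul hs.le,
      inv_mul_cancel₀ hqp, rpow_one, hη]
  · rintro _ ⟨u, hu, rfl⟩
    simp only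
    rw [rpow_sub_one_sub_rpow_sub_one_eq hpq hu, ← hη]
    exact rpow_mul_one_sub_le ha (rpow_nonneg (le_of_lt hu) _)

theorem stmt_13_general (ω p q : ℝ) (hp : 1 < p) (hpq : p < q)
    (f : ℝ → ℝ) (hf : f = fun u : ℝ => -ω * u + u ^ p - u ^ q) :
    (∃ u : ℝ, 0 < u ∧ 0 < f u) ↔
      ω < (q - p) / (q - 1) * ((p - 1) / (q - 1)) ^ ((p - 1) / (q - p)) := by
  have hf_pos : ∀ u : ℝ, 0 < u → (0 < f u ↔ ω < u ^ (p - 1) - u ^ (q - 1)) := by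
    intro u hu
    have hfac : f u = u * (u ^ (p - 1) - u ^ (q - 1) - ω) := by
      rw [hf, mul_sub, mul_sub, ← rpow_one_add' hu.le (by linarith),
        ← rpow_one_add' hu.le (by linarith)]
      ring_nf
    rw [hfac, mul_pos_iff_of_pos_left hu, sub_pos]
  rw [← doublePowerThreshold, lt_isLUB_iff (isGreatest_doublePowerThreshold hp hpq).isLUB]
  simp only [mem_image, mem_Ioi, exists_exists_and_eq_and]
  exact exists_congr fun u ↦ and_congr_right (hf_pos u)

/-- For `f u = -ω u + u^p - u^q`, there exists `u > 0` with `f u > 0`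
iff `ω < η_{p,q} = ((q-p)/(q-1)) ((p-1)/(q-1))^{(p-1)/(q-p)}`. -/
theorem stmt_13 (ω p q : ℝ) (hω : 0 < ω) (hp : 1 < p) (hpq : p < q)
    (f : ℝ → ℝ) (hf : f = fun u : ℝ => -ω * u + u ^ p - u ^ q) :
    (∃ u : ℝ, 0 < u ∧ 0 < f u) ↔
      ω < (q - p) / (q - 1) * ((p - 1) / (q - 1)) ^ ((p - 1) / (q - p)) :=
  stmt_13_general ω p q hp hpq f hf
end

section
/- Let ω > 0 and q > p > 1 be real numbers, let f(u) = -ω u + u^p - u^q for u > 0, and define f̃(u) = (u f'(u))' f(u) - u f'(u)^2. Then f̃(u) < 0 for every u > 0 if and only if ω < η_{p,q}, where η_{p,q} = ((q-p)/(q-1)) · ((p-1)/(q-1))^{(p-1)/(q-p)}. -/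
/-!
With `x = u ^ (q - p)` and `κ = (q - 1) / (q - p) > 1` one has
`f̃ u = u ^ p * (ω * ((q - 1)^2 x - (p - 1)^2) - (q - p)^2 x ^ κ)`.
By convexity of `x ↦ x ^ κ`, its tangent line at `x = (p - 1)/(q - 1)`, multiplied by
`(q - p)^2`, is exactly `η_{p,q} * ((q - 1)^2 x - (p - 1)^2)`. So `ω < η_{p,q}` makes `f̃` negative
everywhere, and negativity of `f̃` at the tangency point forces `ω < η_{p,q}`.
-/

open Real

noncomputable def tildeTransform (f : ℝ → ℝ) (u : ℝ) : ℝ :=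
  deriv (fun v => v * deriv f v) u * f u - u * deriv f u ^ 2

lemma hasDerivAt_linear_add_rpow_add_rpow (a b c p q : ℝ) {u : ℝ} (hu : 0 < u) :
    HasDerivAt (fun v => a * v + b * v ^ p + c * v ^ q)
      (a + b * (p * u ^ (p - 1)) + c * (q * u ^ (q - 1))) u := by
  have hlin : HasDerivAt (fun v => a * v) a u := by
    simpa using (hasDerivAt_id u).const_mul a
  exact (hlin.add ((hasDerivAt_rpow_const (Or.inl hu.ne')).const_mul b)).add
    ((hasDerivAt_rpow_const (Or.inl hu.ne')).const_mul c)

lemma self_mul_deriv_linear_add_rpow_add_rpow (a b c p q : ℝ) {u : ℝ} (hu : 0 < u) :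
    u * deriv (fun v => a * v + b * v ^ p + c * v ^ q) u =
      a * u + b * p * u ^ p + c * q * u ^ q := by
  rw [(hasDerivAt_linear_add_rpow_add_rpow a b c p q hu).deriv,
    rpow_sub_one hu.ne' p, rpow_sub_one hu.ne' q]
  field_simp

lemma tildeTransform_linear_add_rpow_add_rpow (a b c p q : ℝ) {u : ℝ} (hu : 0 < u) :
    tildeTransform (fun v => a * v + b * v ^ p + c * v ^ q) u =
      u * (a * b * (p - 1) ^ 2 * u ^ (p - 1) + a * c * (q - 1) ^ 2 * u ^ (q - 1)
        + b * c * (q - p) ^ 2 * (u ^ (p - 1) * u ^ (q - 1))) := by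
  have hself : (fun v => v * deriv (fun v => a * v + b * v ^ p + c * v ^ q) v)
      =ᶠ[nhds u] fun v => a * v + b * p * v ^ p + c * q * v ^ q := by
    filter_upwards [Ioi_mem_nhds hu] with v hv
    exact self_mul_deriv_linear_add_rpow_add_rpow a b c p q hv
  rw [tildeTransform, hself.deriv_eq,
    (hasDerivAt_linear_add_rpow_add_rpow a (b * p) (c * q) p q hu).deriv,
    (hasDerivAt_linear_add_rpow_add_rpow a b c p q hu).deriv,
    rpow_sub_one hu.ne' p, rpow_sub_one hu.ne' q]
  field_simp
  ring

lemma tildeTransform_doublePower (ω : ℝ) {p q u : ℝ} (hpq : p ≠ q) (hu : 0 < u) :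
    tildeTransform (fun v => -ω * v + v ^ p - v ^ q) u =
      u ^ p * (ω * ((q - 1) ^ 2 * u ^ (q - p) - (p - 1) ^ 2)
        - (q - p) ^ 2 * (u ^ (q - p)) ^ ((q - 1) / (q - p))) := by
  have hthree : (fun v => -ω * v + v ^ p - v ^ q) =
      fun v => -ω * v + 1 * v ^ p + (-1) * v ^ q := by
    funext v; ring
  have hpow_κ : (u ^ (q - p)) ^ ((q - 1) / (q - p)) = u ^ (q - p) * u ^ (p - 1) := by
    rw [← rpow_mul hu.le, ← rpow_add hu, mul_div_cancel₀ _ (sub_ne_zero.2 hpq.symm)]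
    ring_nf
  have hpow_q : u ^ (q - 1) = u ^ (q - p) * u ^ (p - 1) := by
    rw [← rpow_add hu]; ring_nf
  rw [hthree, tildeTransform_linear_add_rpow_add_rpow _ _ _ _ _ hu, hpow_κ, hpow_q,
    rpow_sub_one hu.ne' p]
  field_simp
  ring

lemma tildeTransform_doublePower_neg_iff (ω : ℝ) {p q u : ℝ} (hpq : p ≠ q) (hu : 0 < u) :
    tildeTransform (fun v => -ω * v + v ^ p - v ^ q) u < 0 ↔
      ω * ((q - 1) ^ 2 * u ^ (q - p) - (p - 1) ^ 2) <
        (q - p) ^ 2 * (u ^ (q - p)) ^ ((q - 1) / (q - p)) := by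
  rw [tildeTransform_doublePower ω hpq hu, ← smul_eq_mul,
    smul_neg_iff_of_pos_left (rpow_pos_of_pos hu p), sub_neg]

lemma rpow_tangent_le_s14 {κ c x : ℝ} (hκ : 1 ≤ κ) (hc : 0 < c) (hx : 0 ≤ x) :
    c ^ (κ - 1) * (κ * x - (κ - 1) * c) ≤ x ^ κ := by
  have hbern := one_add_mul_self_le_rpow_one_add (s := x / c - 1)
    (by linarith [div_nonneg hx hc.le]) hκ
  rw [add_sub_cancel, div_rpow hx hc.le, le_div_iff₀ (rpow_pos_of_pos hc κ)] at hbern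
  calc c ^ (κ - 1) * (κ * x - (κ - 1) * c) = (1 + κ * (x / c - 1)) * c ^ κ := by
        rw [rpow_sub_one hc.ne']; field_simp; ring
    _ ≤ x ^ κ := hbern

noncomputable def uniquenessThreshold (p q : ℝ) : ℝ :=
  (q - p) / (q - 1) * ((p - 1) / (q - 1)) ^ ((p - 1) / (q - p))

section Threshold

variable {p q : ℝ}

lemma uniquenessThreshold_mul_le (hp : 1 < p) (hpq : p < q) {x : ℝ} (hx : 0 ≤ x) :
    uniquenessThreshold p q * ((q - 1) ^ 2 * x - (p - 1) ^ 2) ≤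
      (q - p) ^ 2 * x ^ ((q - 1) / (q - p)) := by
  have hqp : 0 < q - p := by linarith
  have hκ : (q - 1) / (q - p) - 1 = (p - 1) / (q - p) := by field_simp; ring
  have h := rpow_tangent_le_s14 (κ := (q - 1) / (q - p)) (c := (p - 1) / (q - 1))
    (by rw [le_div_iff₀ hqp]; linarith) (div_pos (by linarith) (by linarith)) hx
  rw [hκ] at h
  calc _ = (q - p) ^ 2 * (((p - 1) / (q - 1)) ^ ((p - 1) / (q - p)) *
        ((q - 1) / (q - p) * x - (p - 1) / (q - p) * ((p - 1) / (q - 1)))) := by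
        unfold uniquenessThreshold
        have : q - 1 ≠ 0 := by linarith
        field_simp
    _ ≤ _ := by gcongr

lemma uniquenessThreshold_mul_eq (hp : 1 < p) (hpq : p < q) :
    uniquenessThreshold p q * ((q - 1) ^ 2 * ((p - 1) / (q - 1)) - (p - 1) ^ 2) =
      (q - p) ^ 2 * ((p - 1) / (q - 1)) ^ ((q - 1) / (q - p)) := by
  have hqp : q - p ≠ 0 := by linarith
  have hq1 : q - 1 ≠ 0 := by linarith
  have hκ : (q - 1) / (q - p) = (p - 1) / (q - p) + 1 := by field_simp; ring
  rw [hκ, rpow_add_one (div_pos (by linarith) (by linarith)).ne', uniquenessThreshold]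
  field_simp
  ring

lemma mul_lt_of_lt_uniquenessThreshold (hp : 1 < p) (hpq : p < q) {ω x : ℝ} (hω : 0 ≤ ω)
    (h : ω < uniquenessThreshold p q) (hx : 0 < x) :
    ω * ((q - 1) ^ 2 * x - (p - 1) ^ 2) < (q - p) ^ 2 * x ^ ((q - 1) / (q - p)) := by
  rcases le_or_gt ((q - 1) ^ 2 * x - (p - 1) ^ 2) 0 with hL | hL
  · have : 0 < (q - p) ^ 2 * x ^ ((q - 1) / (q - p)) := by
      have : 0 < q - p := by linarith
      positivity
    nlinarith
  · calc _ < uniquenessThreshold p q * ((q - 1) ^ 2 * x - (p - 1) ^ 2) :=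
          mul_lt_mul_of_pos_right h hL
      _ ≤ _ := uniquenessThreshold_mul_le hp hpq hx.le

lemma lt_uniquenessThreshold_of_mul_lt (hp : 1 < p) (hpq : p < q) {ω : ℝ}
    (h : ω * ((q - 1) ^ 2 * ((p - 1) / (q - 1)) - (p - 1) ^ 2) <
      (q - p) ^ 2 * ((p - 1) / (q - 1)) ^ ((q - 1) / (q - p))) :
    ω < uniquenessThreshold p q := by
  have hL : 0 < (q - 1) ^ 2 * ((p - 1) / (q - 1)) - (p - 1) ^ 2 := by
    have : (q - 1) ^ 2 * ((p - 1) / (q - 1)) - (p - 1) ^ 2 = (p - 1) * (q - p) := by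
      field_simp; ring
    rw [this]; exact mul_pos (by linarith) (by linarith)
  rw [← uniquenessThreshold_mul_eq hp hpq] at h
  exact lt_of_mul_lt_mul_right h hL.le

end Threshold

/-- For `f u = -ω u + u^p - u^q`, `f̃ u < 0` for every `u > 0` iff
`ω < η_{p,q} = ((q-p)/(q-1)) ((p-1)/(q-1))^{(p-1)/(q-p)}`. -/
theorem stmt_14 (ω p q : ℝ) (hω : 0 < ω) (hp : 1 < p) (hpq : p < q)
    (f : ℝ → ℝ) (hf : f = fun u : ℝ => -ω * u + u ^ p - u ^ q)
    (ftilde : ℝ → ℝ)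
    (hftilde : ftilde = fun u : ℝ =>
      deriv (fun v : ℝ => v * deriv f v) u * f u - u * (deriv f u) ^ 2) :
    (∀ u : ℝ, 0 < u → ftilde u < 0) ↔
      ω < (q - p) / (q - 1) * ((p - 1) / (q - 1)) ^ ((p - 1) / (q - p)) := by
  subst hftilde hf
  change (∀ u, 0 < u → tildeTransform _ u < 0) ↔ ω < uniquenessThreshold p q
  have hneg_iff u (hu : 0 < u) := tildeTransform_doublePower_neg_iff ω hpq.ne hu
  constructor
  · intro h
    -- `f̃` at the point where `u ^ (q - p) = (p - 1) / (q - 1)`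
    have hr : 0 < (p - 1) / (q - 1) := div_pos (by linarith) (by linarith)
    have hu₀ : 0 < ((p - 1) / (q - 1)) ^ (q - p)⁻¹ := rpow_pos_of_pos hr _
    have h₀ := (hneg_iff _ hu₀).1 (h _ hu₀)
    rw [rpow_inv_rpow hr.le (by linarith)] at h₀
    exact lt_uniquenessThreshold_of_mul_lt hp hpq h₀
  · intro h u hu
    exact (hneg_iff u hu).2
      (mul_lt_of_lt_uniquenessThreshold hp hpq hω.le h (rpow_pos_of_pos hu _))
end

section
/- Let ω > 0 and q > p > 1 be real numbers, and let f(u) = -ω u + u^p - u^q for u > 0. Then f(u) < 0 for every u > 0 if and only if ω > η_{p,q}, where η_{p,q} = ((q-p)/(q-1)) · ((p-1)/(q-1))^{(p-1)/(q-p)}. -/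
/-!
Writing `a = p - 1`, `b = q - 1`, we have `f u = u * (u ^ a - u ^ b - ω)`, so `f < 0` on `(0, ∞)` says
exactly that `ω` strictly exceeds every value of `u ↦ u ^ a - u ^ b`. This function attains its maximum
`η = (b - a) / b * (a / b) ^ (a / (b - a))` at `u = (a / b) ^ (b - a)⁻¹`; the upper bound is the weighted
AM–GM inequality applied to `λ = (a / b) ^ (b / (b - a))` and `u ^ b` with weights `1 - a / b` and `a / b`.
-/

open Real Set

namespace Real

variable {a b : ℝ}

theorem rpow_sub_rpow_le (ha : 0 < a) (hab : a < b) {u : ℝ} (hu : 0 ≤ u) :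
    u ^ a - u ^ b ≤ (b - a) / b * (a / b) ^ (a / (b - a)) := by
  have hb : 0 < b := ha.trans hab
  have hba : b - a ≠ 0 := (sub_pos.2 hab).ne'
  set θ := a / b with hθ_def
  have hθ : 0 < θ := div_pos ha hb
  have hθ_one : θ < 1 := (div_lt_one hb).2 hab
  have hlam : θ ^ (b / (b - a)) = θ ^ (a / (b - a)) * θ := by
    rw [← rpow_add_one hθ.ne']
    congr 1
    field_simp
    ring
  have hlam_pow : (θ ^ (b / (b - a))) ^ (1 - θ) = θ := by
    rw [← rpow_mul hθ.le, hθ_def]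
    convert rpow_one (a / b) using 2
    field_simp
  have hu_pow : (u ^ b) ^ θ = u ^ a := by
    rw [← rpow_mul hu, hθ_def, mul_div_cancel₀ a hb.ne']
  have amgm := geom_mean_le_arith_mean2_weighted (sub_pos.2 hθ_one).le hθ.le
    (rpow_pos_of_pos hθ (b / (b - a))).le (rpow_nonneg hu b) (sub_add_cancel 1 θ)
  rw [hlam_pow, hu_pow, hlam] at amgm
  have hη : (b - a) / b * θ ^ (a / (b - a)) = (1 - θ) * θ ^ (a / (b - a)) := by
    rw [hθ_def]
    field_simp
  rw [hη]
  refine le_of_mul_le_mul_left ?_ hθ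
  linarith

theorem rpow_sub_rpow_critical (ha : 0 < a) (hab : a < b) :
    ((a / b) ^ (b - a)⁻¹) ^ a - ((a / b) ^ (b - a)⁻¹) ^ b = (b - a) / b * (a / b) ^ (a / (b - a)) := by
  have hb : 0 < b := ha.trans hab
  have hba : b - a ≠ 0 := (sub_pos.2 hab).ne'
  have hθ : 0 < a / b := div_pos ha hb
  have hexp : (b - a)⁻¹ * b = a / (b - a) + 1 := by
    field_simp
    ring
  rw [← rpow_mul hθ.le, ← rpow_mul hθ.le, hexp, rpow_add_one hθ.ne', inv_mul_eq_div]
  field_simp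

theorem isGreatest_rpow_sub_rpow (ha : 0 < a) (hab : a < b) :
    IsGreatest ((fun u => u ^ a - u ^ b) '' Ioi 0) ((b - a) / b * (a / b) ^ (a / (b - a))) :=
  ⟨⟨_, rpow_pos_of_pos (div_pos ha (ha.trans hab)) _, rpow_sub_rpow_critical ha hab⟩,
    forall_mem_image.2 fun _ hu => rpow_sub_rpow_le ha hab (le_of_lt hu)⟩

end Real

theorem stmt_15_general (ω p q : ℝ) (hp : 1 < p) (hpq : p < q)
    (f : ℝ → ℝ) (hf : f = fun u : ℝ => -ω * u + u ^ p - u ^ q) :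
    (∀ u : ℝ, 0 < u → f u < 0) ↔
      ω > (q - p) / (q - 1) * ((p - 1) / (q - 1)) ^ ((p - 1) / (q - p)) := by
  have hfactor : ∀ u > 0, f u = u * (u ^ (p - 1) - u ^ (q - 1) - ω) := by
    intro u hu
    rw [hf, rpow_sub_one hu.ne', rpow_sub_one hu.ne']
    field_simp
    ring
  have hmax := isGreatest_rpow_sub_rpow (a := p - 1) (b := q - 1) (by linarith) (by linarith)
  rw [sub_sub_sub_cancel_right] at hmax
  rw [gt_iff_lt, hmax.lt_iff, forall_mem_image]
  refine forall₂_congr fun u hu => ?_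
  rw [hfactor u hu]
  exact (smul_neg_iff_of_pos_left hu).trans sub_neg

/-- For `f u = -ω u + u^p - u^q`, `f u < 0` for every `u > 0` iff
`ω > η_{p,q} = ((q-p)/(q-1)) ((p-1)/(q-1))^{(p-1)/(q-p)}`. -/
theorem stmt_15 (ω p q : ℝ) (hω : 0 < ω) (hp : 1 < p) (hpq : p < q)
    (f : ℝ → ℝ) (hf : f = fun u : ℝ => -ω * u + u ^ p - u ^ q) :
    (∀ u : ℝ, 0 < u → f u < 0) ↔
      ω > (q - p) / (q - 1) * ((p - 1) / (q - 1)) ^ ((p - 1) / (q - p)) :=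
  stmt_15_general ω p q hp hpq f hf
end

section
/- Let ω > 0 and q > p > 1 be real numbers, and let f(u) = -ω u + u^p - u^q for u > 0. Then f has exactly one zero on (0,∞) if and only if ω = η_{p,q}, where η_{p,q} = ((q-p)/(q-1)) · ((p-1)/(q-1))^{(p-1)/(q-p)}; moreover in that case the unique zero is u = ((p-1)/(q-1))^{1/(q-p)} and f(u) ≤ 0 for all u > 0. -/
/-!
Since `f u = u (g u - ω)` with `g u = u ^ (p - 1) - u ^ (q - 1)`, the zeros of `f` are the
solutions of `g u = ω`. Bernoulli's inequality `s ^ α ≥ 1 + α (s - 1)` shows that `g` has a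
strict global maximum `η_{p,q}` at its critical point `u* = ((p - 1) / (q - 1)) ^ (1 / (q - p))`.
Hence there is no zero for `ω > η`, only `u*` for `ω = η`, and for `0 < ω < η` the intermediate
value theorem gives a zero on each side of `u*`, because `g < ω` near `0` and `g < 0` beyond `1`.
-/

open Set

lemma one_add_mul_sub_one_lt_rpow {s α : ℝ} (hs : 0 ≤ s) (hs1 : s ≠ 1) (hα : 1 < α) :
    1 + α * (s - 1) < s ^ α := by
  simpa using one_add_mul_self_lt_rpow_one_add (s := s - 1) (by linarith) (sub_ne_zero.2 hs1) hα

section RpowSubRpow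

variable {a b c : ℝ}

-- `hcrit` says that `c` is the critical point of `u ↦ u ^ a - u ^ b`,
-- i.e. `a c ^ (a - 1) = b c ^ (b - 1)`.
lemma rpow_sub_rpow_lt_of_ne (ha : 0 < a) (hab : a < b) (hc : 0 < c)
    (hcrit : c ^ (b - a) = a / b) {u : ℝ} (hu : 0 < u) (hne : u ≠ c) :
    u ^ a - u ^ b < c ^ a - c ^ b := by
  have hb : 0 < b := ha.trans hab
  have hs : (u / c) ^ a = u ^ a / c ^ a := Real.div_rpow hu.le hc.le a
  -- Bernoulli's inequality for `s = (u / c) ^ a` and the exponent `b / a`, rescaled by `c ^ a`.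
  have hs1 : (u / c) ^ a ≠ 1 := by
    rw [Ne, ← Real.one_rpow a, Real.rpow_left_inj (by positivity) zero_le_one ha.ne',
      div_eq_one_iff_eq hc.ne']
    exact hne
  have hbern := one_add_mul_sub_one_lt_rpow (by positivity) hs1 ((one_lt_div ha).2 hab)
  rw [← Real.rpow_mul (by positivity), mul_div_cancel₀ _ ha.ne', hs, Real.div_rpow hu.le hc.le]
    at hbern
  have hcb : c ^ b = c ^ a * (a / b) := by
    rw [← hcrit, ← Real.rpow_add hc, add_sub_cancel]
  rw [hcb] at hbern ⊢
  field_simp at hbern ⊢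
  linarith

lemma rpow_sub_rpow_le (ha : 0 < a) (hab : a < b) (hc : 0 < c)
    (hcrit : c ^ (b - a) = a / b) {u : ℝ} (hu : 0 < u) :
    u ^ a - u ^ b ≤ c ^ a - c ^ b := by
  rcases eq_or_ne u c with rfl | hne
  · exact le_rfl
  · exact (rpow_sub_rpow_lt_of_ne ha hab hc hcrit hu hne).le

lemma rpow_sub_rpow_eq_iff (ha : 0 < a) (hab : a < b) (hc : 0 < c)
    (hcrit : c ^ (b - a) = a / b) {u : ℝ} (hu : 0 < u) :
    u ^ a - u ^ b = c ^ a - c ^ b ↔ u = c := by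
  refine ⟨fun h => ?_, fun h => h ▸ rfl⟩
  by_contra hne
  exact (rpow_sub_rpow_lt_of_ne ha hab hc hcrit hu hne).ne h

lemma rpow_sub_rpow_of_crit (hc : 0 < c) (hcrit : c ^ (b - a) = a / b) (hb : b ≠ 0) :
    c ^ a - c ^ b = (b - a) / b * c ^ a := by
  rw [← sub_add_cancel b a, Real.rpow_add hc, sub_add_cancel, hcrit]
  field_simp

lemma exists_rpow_sub_rpow_eq_of_lt (ha : 0 < a) (hab : a < b) (hc : 0 < c) {ω : ℝ}
    (hω : 0 < ω) (hωc : ω < c ^ a - c ^ b) :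
    (∃ u ∈ Ioo 0 c, u ^ a - u ^ b = ω) ∧ ∃ u ∈ Ioi c, u ^ a - u ^ b = ω := by
  have hg : Continuous fun u : ℝ => u ^ a - u ^ b :=
    (Real.continuous_rpow_const ha.le).sub (Real.continuous_rpow_const (ha.trans hab).le)
  constructor
  · obtain ⟨x, hx, hxm⟩ := exists_between (lt_min hc (Real.rpow_pos_of_pos hω (1 / a)))
    obtain ⟨hxc, hxω⟩ := lt_min_iff.1 hxm
    have hxa : x ^ a < ω := calc
      x ^ a < (ω ^ (1 / a)) ^ a := Real.rpow_lt_rpow hx.le hxω ha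
      _ = ω := by rw [one_div, Real.rpow_inv_rpow hω.le ha.ne']
    have hxb : 0 < x ^ b := by positivity
    obtain ⟨u, hu, hgu⟩ := intermediate_value_Ioo hxc.le hg.continuousOn
      (show ω ∈ Ioo (x ^ a - x ^ b) (c ^ a - c ^ b) from ⟨by linarith, hωc⟩)
    exact ⟨u, ⟨hx.trans hu.1, hu.2⟩, hgu⟩
  · have hlarge : (c + 1) ^ a < (c + 1) ^ b := Real.rpow_lt_rpow_of_exponent_lt (by linarith) hab
    obtain ⟨u, hu, hgu⟩ := intermediate_value_Ioo' (by linarith : c ≤ c + 1) hg.continuousOn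
      (show ω ∈ Ioo ((c + 1) ^ a - (c + 1) ^ b) (c ^ a - c ^ b) from ⟨by linarith, hωc⟩)
    exact ⟨u, hu.1, hgu⟩

end RpowSubRpow

lemma neg_mul_add_rpow_sub_rpow_eq_mul {u : ℝ} (hu : 0 < u) (ω p q : ℝ) :
    -ω * u + u ^ p - u ^ q = u * (u ^ (p - 1) - u ^ (q - 1) - ω) := by
  rw [Real.rpow_sub_one hu.ne', Real.rpow_sub_one hu.ne']
  field_simp
  ring

section CriticalPoint

variable {p q : ℝ}

lemma rpow_one_div_rpow_sub_eq (hp : 1 < p) (hpq : p < q) :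
    (((p - 1) / (q - 1)) ^ (1 / (q - p))) ^ (q - 1 - (p - 1)) = (p - 1) / (q - 1) := by
  rw [show q - 1 - (p - 1) = q - p by ring, one_div,
    Real.rpow_inv_rpow (div_pos (by linarith) (by linarith)).le (by linarith)]

lemma rpow_one_div_rpow_sub_rpow_eq (hp : 1 < p) (hpq : p < q) :
    (((p - 1) / (q - 1)) ^ (1 / (q - p))) ^ (p - 1) -
        (((p - 1) / (q - 1)) ^ (1 / (q - p))) ^ (q - 1) =
      (q - p) / (q - 1) * ((p - 1) / (q - 1)) ^ ((p - 1) / (q - p)) := by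
  have hθ : 0 < (p - 1) / (q - 1) := div_pos (by linarith) (by linarith)
  rw [rpow_sub_rpow_of_crit (by positivity) (rpow_one_div_rpow_sub_eq hp hpq) (by linarith),
    ← Real.rpow_mul hθ.le, one_div_mul_eq_div, show q - 1 - (p - 1) = q - p by ring]

end CriticalPoint

/-- For `f u = -ω u + u^p - u^q`, `f` has exactly one zero on `(0,∞)`
iff `ω = η_{p,q} = ((q-p)/(q-1)) ((p-1)/(q-1))^{(p-1)/(q-p)}`; moreover, in that case
the unique zero is `u = ((p-1)/(q-1))^{1/(q-p)}` and `f u ≤ 0` for all `u > 0`. -/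
theorem stmt_16 (ω p q : ℝ) (hω : 0 < ω) (hp : 1 < p) (hpq : p < q)
    (f : ℝ → ℝ) (hf : f = fun u : ℝ => -ω * u + u ^ p - u ^ q) :
    ((∃! u : ℝ, 0 < u ∧ f u = 0) ↔
      ω = (q - p) / (q - 1) * ((p - 1) / (q - 1)) ^ ((p - 1) / (q - p))) ∧
    (ω = (q - p) / (q - 1) * ((p - 1) / (q - 1)) ^ ((p - 1) / (q - p)) →
      ∀ u : ℝ, 0 < u →
        f u ≤ 0 ∧ (f u = 0 ↔ u = ((p - 1) / (q - 1)) ^ (1 / (q - p)))) := by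
  have hab : p - 1 < q - 1 := by linarith
  have hcrit := rpow_one_div_rpow_sub_eq hp hpq
  rw [← rpow_one_div_rpow_sub_rpow_eq hp hpq]
  set c := ((p - 1) / (q - 1)) ^ (1 / (q - p))
  have hc : 0 < c := Real.rpow_pos_of_pos (div_pos (by linarith) (by linarith)) _
  have hfac (u : ℝ) (hu : 0 < u) : f u = u * (u ^ (p - 1) - u ^ (q - 1) - ω) := by
    rw [hf]
    exact neg_mul_add_rpow_sub_rpow_eq_mul hu ω p q
  have hroot (u : ℝ) (hu : 0 < u) : f u = 0 ↔ u ^ (p - 1) - u ^ (q - 1) = ω := by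
    rw [hfac u hu, mul_eq_zero, or_iff_right hu.ne', sub_eq_zero]
  have hle (u : ℝ) (hu : 0 < u) := rpow_sub_rpow_le (by linarith) hab hc hcrit hu
  have heq (u : ℝ) (hu : 0 < u) := rpow_sub_rpow_eq_iff (by linarith) hab hc hcrit hu
  have hcase : ω = c ^ (p - 1) - c ^ (q - 1) →
      ∀ u : ℝ, 0 < u → f u ≤ 0 ∧ (f u = 0 ↔ u = c) := by
    rintro rfl u hu
    rw [hroot u hu, heq u hu, hfac u hu]
    exact ⟨mul_nonpos_of_nonneg_of_nonpos hu.le (by linarith [hle u hu]), Iff.rfl⟩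
  refine ⟨⟨fun ⟨u₀, ⟨hu₀, hfu₀⟩, huniq⟩ => ?_, fun hωc => ?_⟩, hcase⟩
  · rcases lt_trichotomy ω (c ^ (p - 1) - c ^ (q - 1)) with hlt | hωc | hgt
    · obtain ⟨⟨u₁, hu₁, hgu₁⟩, u₂, hu₂, hgu₂⟩ :=
        exists_rpow_sub_rpow_eq_of_lt (by linarith) hab hc hω hlt
      have h₁ := huniq u₁ ⟨hu₁.1, (hroot u₁ hu₁.1).2 hgu₁⟩
      have h₂ := huniq u₂ ⟨hc.trans hu₂, (hroot u₂ (hc.trans hu₂)).2 hgu₂⟩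
      linarith [hu₁.2, mem_Ioi.1 hu₂]
    · exact hωc
    · linarith [hle u₀ hu₀, (hroot u₀ hu₀).1 hfu₀]
  · exact ⟨c, ⟨hc, (hcase hωc c hc).2.2 rfl⟩,
      fun u ⟨hu, hfu⟩ => (hcase hωc u hu).2.1 hfu⟩
end
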